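/- arXiv:1608.02328 — 9 statements merged into one kernel-verified Lean document; each statement's English description precedes it below -/
import Mathlib

section
/- If M is a nontrivial Hilbert space contained in H², T_z maps M into M, and T_z is bounded below on M (δ‖f‖_M ≤ ‖zf‖_M for some δ>0 and all f ∈ M), then the orthogonal complement N = M ⊖ T_z(M) is nontrivial, i.e., N ≠ {0}. -/
open scoped InnerProductSpace

noncomputable section

def coefn (f : PowerSeries ℂ) (n : ℕ) : ℂ := PowerSeries.coeff n f

def MemH2 (f : PowerSeries ℂ) : Prop := Summable (fun n => ‖coefn f n‖ ^ 2)

/-- If `M` is a nontrivial Hilbert space inside `H²`, `T_z(M) ⊆ M`, and `T_z`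
is bounded below on `M`, then `N = M ⊖ T_z(M)` is nontrivial. -/
theorem stmt1
    {E : Type*} [NormedAddCommGroup E] [InnerProductSpace ℂ E] [CompleteSpace E]
    (J : E →ₗ[ℂ] PowerSeries ℂ) (hJinj : Function.Injective J)
    (hH2 : ∀ x : E, MemH2 (J x))
    (hnt : ∃ x : E, x ≠ 0)
    (T : E →L[ℂ] E) (hT : ∀ x : E, J (T x) = PowerSeries.X * J x)
    (δ : ℝ) (hδ : 0 < δ)
    (hlow : ∀ x : E, δ * ‖x‖ ≤ ‖T x‖) :
    (LinearMap.range (T : E →ₗ[ℂ] E))ᗮ ≠ ⊥ := by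
  intro hbot
  -- T is antilipschitz, hence has closed range
  have hanti : AntilipschitzWith (Real.toNNReal δ⁻¹) T := by
    apply ContinuousLinearMap.antilipschitz_of_bound
    intro x
    rw [Real.coe_toNNReal _ (by positivity)]
    rw [inv_mul_eq_div, le_div_iff₀ hδ, mul_comm]
    exact hlow x
  have hclosed : IsClosed (LinearMap.range (T : E →ₗ[ℂ] E) : Set E) :=
    hanti.isClosed_range T.uniformContinuous
  have : CompleteSpace (LinearMap.range (T : E →ₗ[ℂ] E)) := hclosed.completeSpace_coe
  have htop : LinearMap.range (T : E →ₗ[ℂ] E) = ⊤ :=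
    Submodule.orthogonal_eq_bot_iff.mp hbot
  have hsurj : Function.Surjective T := LinearMap.range_eq_top.mp htop
  -- every J x is divisible by X^n for all n
  have hdvd : ∀ (n : ℕ) (x : E), ∃ y : E, J x = PowerSeries.X ^ n * J y := by
    intro n
    induction n with
    | zero => intro x; exact ⟨x, by simp⟩
    | succ n ih =>
      intro x
      obtain ⟨y, hy⟩ := ih x
      obtain ⟨z, hz⟩ := hsurj y
      refine ⟨z, ?_⟩
      rw [hy, ← hz, hT z, pow_succ]
      ring
  have hzero : ∀ x : E, x = 0 := by
    intro x
    have : J x = 0 := by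
      ext n
      obtain ⟨y, hy⟩ := hdvd (n + 1) x
      have : (PowerSeries.X : PowerSeries ℂ) ^ (n + 1) ∣ J x := ⟨J y, hy⟩
      rw [PowerSeries.X_pow_dvd_iff] at this
      simpa using this n (Nat.lt_succ_self n)
    have : J x = J 0 := by simpa using this
    exact hJinj this
  obtain ⟨x, hx⟩ := hnt
  exact hx (hzero x)
end
end

section
/- Let M ⊆ H² be a Hilbert space on which T_z satisfies δ‖f‖_M ≤ ‖zf‖_M ≤ ‖f‖_M for some δ>0 and T_z*ⁿ T_z^{n+1}(M) ⊆ T_z(M) for every n ∈ ℕ. Then for every n, M decomposes orthogonally as M = N ⊕ T_z(N) ⊕ ⋯ ⊕ T_zⁿ(N) ⊕ T_z^{n+1}(M), where N = M ⊖ T_z(M). -/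
open scoped InnerProductSpace

noncomputable section

/-- Under the hypotheses of the main theorem, for every `n` one has the
orthogonal decomposition `M = N ⊕ T_z(N) ⊕ ⋯ ⊕ T_zⁿ(N) ⊕ T_z^{n+1}(M)` where
`N = M ⊖ T_z(M)`. -/
theorem stmt2
    {E : Type*} [NormedAddCommGroup E] [InnerProductSpace ℂ E] [CompleteSpace E]
    (J : E →ₗ[ℂ] PowerSeries ℂ) (hJinj : Function.Injective J)
    (hH2 : ∀ x : E, MemH2 (J x))
    (T : E →L[ℂ] E) (hT : ∀ x : E, J (T x) = PowerSeries.X * J x)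
    (δ : ℝ) (hδ : 0 < δ)
    (hlow : ∀ x : E, δ * ‖x‖ ≤ ‖T x‖)
    (hup : ∀ x : E, ‖T x‖ ≤ ‖x‖)
    (hadj : ∀ n : ℕ, ∀ x : E,
      ((ContinuousLinearMap.adjoint T) ^ n) ((T ^ (n + 1)) x) ∈ LinearMap.range (T : E →ₗ[ℂ] E))
    (N : Submodule ℂ E) (hN : N = (LinearMap.range (T : E →ₗ[ℂ] E))ᗮ) :
    ∀ n : ℕ,
      ((⨆ k ∈ Finset.range (n + 1), Submodule.map ((T ^ k : E →L[ℂ] E) : E →ₗ[ℂ] E) N) ⊔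
          LinearMap.range ((T ^ (n + 1) : E →L[ℂ] E) : E →ₗ[ℂ] E) = ⊤) ∧
      (∀ i ∈ Finset.range (n + 1), ∀ j ∈ Finset.range (n + 1), i ≠ j →
        Submodule.map ((T ^ i : E →L[ℂ] E) : E →ₗ[ℂ] E) N ⟂ Submodule.map ((T ^ j : E →L[ℂ] E) : E →ₗ[ℂ] E) N) ∧
      (∀ i ∈ Finset.range (n + 1),
        Submodule.map ((T ^ i : E →L[ℂ] E) : E →ₗ[ℂ] E) N ⟂ LinearMap.range ((T ^ (n + 1) : E →L[ℂ] E) : E →ₗ[ℂ] E)) := by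
  -- key inner-product vanishing lemma
  have key : ∀ i j : ℕ, i < j → ∀ a ∈ N, ∀ b : E,
      ⟪(T ^ i) a, (T ^ j) b⟫_ℂ = 0 := by
    intro i j hij a ha b
    have hsplit : (T ^ j) b = (T ^ (i + 1)) ((T ^ (j - i - 1)) b) := by
      rw [← ContinuousLinearMap.mul_apply, ← pow_add]
      congr 2
      omega
    have h1 : ⟪(T ^ i) a, (T ^ j) b⟫_ℂ
        = ⟪a, (ContinuousLinearMap.adjoint (T ^ i)) ((T ^ j) b)⟫_ℂ :=
      (ContinuousLinearMap.adjoint_inner_right (T ^ i) a _).symm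
    have h2 : ContinuousLinearMap.adjoint (T ^ i)
        = (ContinuousLinearMap.adjoint T) ^ i := by
      simp [← ContinuousLinearMap.star_eq_adjoint, star_pow]
    have hmem : (ContinuousLinearMap.adjoint (T ^ i)) ((T ^ j) b)
        ∈ LinearMap.range (T : E →ₗ[ℂ] E) := by
      rw [h2, hsplit]
      exact hadj i _
    rw [h1]
    rw [hN] at ha
    exact (Submodule.mem_orthogonal' _ a).mp ha _ hmem
  -- range T is closed, hence complete
  have hanti : AntilipschitzWith (⟨δ, hδ.le⟩ : NNReal)⁻¹ T := by
    apply T.antilipschitz_of_bound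
    intro x
    show ‖x‖ ≤ δ⁻¹ * ‖T x‖
    rw [inv_mul_eq_div, le_div_iff₀ hδ, mul_comm]
    exact hlow x
  have hclosed : IsClosed (LinearMap.range (T : E →ₗ[ℂ] E) : Set E) := by
    have := hanti.isClosed_range T.uniformContinuous
    simpa [Set.range, LinearMap.coe_range] using this
  haveI : CompleteSpace (LinearMap.range (T : E →ₗ[ℂ] E)) := hclosed.completeSpace_coe
  have hbase : N ⊔ LinearMap.range (T : E →ₗ[ℂ] E) = ⊤ := by
    rw [hN, sup_comm]
    exact Submodule.sup_orthogonal_of_hasOrthogonalProjection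
  -- range step: range T^k = map T^k N ⊔ range T^{k+1}
  have hstep : ∀ k : ℕ, LinearMap.range ((T ^ k : E →L[ℂ] E) : E →ₗ[ℂ] E)
      = Submodule.map ((T ^ k : E →L[ℂ] E) : E →ₗ[ℂ] E) N ⊔ LinearMap.range ((T ^ (k + 1) : E →L[ℂ] E) : E →ₗ[ℂ] E) := by
    intro k
    have : LinearMap.range ((T ^ k : E →L[ℂ] E) : E →ₗ[ℂ] E) = Submodule.map ((T ^ k : E →L[ℂ] E) : E →ₗ[ℂ] E) (N ⊔ LinearMap.range (T : E →ₗ[ℂ] E)) := by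
      rw [hbase]
      ext x
      simp [LinearMap.mem_range, Submodule.mem_map]
    rw [this, Submodule.map_sup]
    congr 1
    ext x
    simp only [Submodule.mem_map, LinearMap.mem_range]
    constructor
    · rintro ⟨y, ⟨z, rfl⟩, rfl⟩
      exact ⟨z, by rw [pow_succ]; rfl⟩
    · rintro ⟨z, rfl⟩
      exact ⟨T z, ⟨z, rfl⟩, by rw [pow_succ]; rfl⟩
  intro n
  refine ⟨?_, ?_, ?_⟩
  · induction n with
    | zero =>
        have h1 : Submodule.map (1 : E →ₗ[ℂ] E) N = N := by
          ext x; simp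
        simpa [h1] using hbase
    | succ m ih =>
        have hins : (⨆ k ∈ Finset.range (m + 2), Submodule.map ((T ^ k : E →L[ℂ] E) : E →ₗ[ℂ] E) N)
            = (⨆ k ∈ Finset.range (m + 1), Submodule.map ((T ^ k : E →L[ℂ] E) : E →ₗ[ℂ] E) N)
              ⊔ Submodule.map ((T ^ (m + 1) : E →L[ℂ] E) : E →ₗ[ℂ] E) N := by
          rw [Finset.range_add_one, Finset.iSup_insert, sup_comm]
        rw [hins, sup_assoc, ← hstep (m + 1), ih]
  · intro i hi j hj hij
    rcases Nat.lt_or_ge i j with h | h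
    · rw [Submodule.isOrtho_iff_inner_eq]
      rintro _ ⟨a, ha, rfl⟩ _ ⟨b, hb, rfl⟩
      exact key i j h a ha b
    · have h' : j < i := lt_of_le_of_ne h (Ne.symm hij)
      refine (Submodule.isOrtho_iff_inner_eq.mpr ?_).symm
      rintro _ ⟨a, ha, rfl⟩ _ ⟨b, hb, rfl⟩
      exact key j i h' a ha b
  · intro i hi
    rw [Submodule.isOrtho_iff_inner_eq]
    rintro _ ⟨a, ha, rfl⟩ _ ⟨b, rfl⟩
    exact key i (n + 1) (by simpa [Nat.lt_succ_iff] using hi) a ha b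
end
end

section
/- Under the hypotheses of the main theorem, every unit vector f in N = M ⊖ T_z(M) satisfies: the sequence of powers {zᵏf}_{k≥0} is orthogonal in M with ‖zᵏf‖_M ≤ 1, and consequently for every polynomial g = Σ_{k=0}^n γ_k zᵏ, ‖fg‖²_M = Σ |γ_k|² ‖zᵏf‖²_M ≤ ‖g‖²_{H²}. -/
open scoped InnerProductSpace

noncomputable section

/-- Under the hypotheses of the main theorem, for a unit vector `f` in
`N = M ⊖ T_z(M)` the powers `zᵏf = T_zᵏ f` are pairwise orthogonal with norms `≤ 1`,
and for every polynomial `g = Σ_{k≤n} γ_k zᵏ` one has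
`‖fg‖² = Σ |γ_k|² ‖zᵏf‖² ≤ ‖g‖²_{H²}`. -/
theorem stmt3
    {E : Type*} [NormedAddCommGroup E] [InnerProductSpace ℂ E] [CompleteSpace E]
    (J : E →ₗ[ℂ] PowerSeries ℂ) (hJinj : Function.Injective J)
    (hH2 : ∀ x : E, MemH2 (J x))
    (T : E →L[ℂ] E) (hT : ∀ x : E, J (T x) = PowerSeries.X * J x)
    (δ : ℝ) (hδ : 0 < δ)
    (hlow : ∀ x : E, δ * ‖x‖ ≤ ‖T x‖)
    (hup : ∀ x : E, ‖T x‖ ≤ ‖x‖)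
    (hadj : ∀ n : ℕ, ∀ x : E,
      ((ContinuousLinearMap.adjoint T) ^ n) ((T ^ (n + 1)) x) ∈ LinearMap.range (T : E →ₗ[ℂ] E))
    (f : E) (hf : f ∈ (LinearMap.range (T : E →ₗ[ℂ] E))ᗮ) (hf1 : ‖f‖ = 1) :
    (∀ j k : ℕ, j ≠ k → ⟪(T ^ j) f, (T ^ k) f⟫_ℂ = 0) ∧
    (∀ k : ℕ, ‖(T ^ k) f‖ ≤ 1) ∧
    (∀ n : ℕ, ∀ γ : ℕ → ℂ,
      ‖∑ k ∈ Finset.range (n + 1), γ k • (T ^ k) f‖ ^ 2 =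
        ∑ k ∈ Finset.range (n + 1), ‖γ k‖ ^ 2 * ‖(T ^ k) f‖ ^ 2 ∧
      ‖∑ k ∈ Finset.range (n + 1), γ k • (T ^ k) f‖ ^ 2 ≤
        ∑ k ∈ Finset.range (n + 1), ‖γ k‖ ^ 2) := by
  -- orthogonality for j < k
  have key : ∀ j k : ℕ, j < k → ⟪(T ^ j) f, (T ^ k) f⟫_ℂ = 0 := by
    intro j k hjk
    obtain ⟨r, hr⟩ : ∃ r, k = (j + 1) + r := ⟨k - (j + 1), by omega⟩
    have h1 : (T ^ k) f = (T ^ (j + 1)) ((T ^ r) f) := by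
      rw [hr, pow_add]; rfl
    have h2 : ⟪(T ^ j) f, (T ^ k) f⟫_ℂ
        = ⟪f, ((ContinuousLinearMap.adjoint (T ^ j))) ((T ^ k) f)⟫_ℂ := by
      rw [ContinuousLinearMap.adjoint_inner_right]
    have h3 : ContinuousLinearMap.adjoint (T ^ j) = (ContinuousLinearMap.adjoint T) ^ j := by
      rw [← ContinuousLinearMap.star_eq_adjoint, ← ContinuousLinearMap.star_eq_adjoint, star_pow]
    rw [h2, h3, h1]
    exact (Submodule.mem_orthogonal' _ _).mp hf _ (hadj j ((T ^ r) f))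
  have ortho : ∀ j k : ℕ, j ≠ k → ⟪(T ^ j) f, (T ^ k) f⟫_ℂ = 0 := by
    intro j k hjk
    rcases lt_or_gt_of_ne hjk with h | h
    · exact key j k h
    · rw [← inner_conj_symm, key k j h, map_zero]
  have hnorm : ∀ k : ℕ, ‖(T ^ k) f‖ ≤ 1 := by
    intro k
    induction k with
    | zero => simp [hf1]
    | succ n ih =>
      calc ‖(T ^ (n + 1)) f‖ = ‖T ((T ^ n) f)‖ := by rw [pow_succ']; rfl
        _ ≤ ‖(T ^ n) f‖ := hup _
        _ ≤ 1 := ih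
  refine ⟨ortho, hnorm, fun n γ => ?_⟩
  have hsum : ‖∑ k ∈ Finset.range (n + 1), γ k • (T ^ k) f‖ ^ 2 =
      ∑ k ∈ Finset.range (n + 1), ‖γ k‖ ^ 2 * ‖(T ^ k) f‖ ^ 2 := by
    have := inner_self_eq_norm_sq (𝕜 := ℂ) (∑ k ∈ Finset.range (n + 1), γ k • (T ^ k) f)
    rw [← this]
    rw [sum_inner]
    have : ∀ j ∈ Finset.range (n + 1),
        ⟪γ j • (T ^ j) f, ∑ k ∈ Finset.range (n + 1), γ k • (T ^ k) f⟫_ℂ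
        = (‖γ j‖ ^ 2 * ‖(T ^ j) f‖ ^ 2 : ℝ) := by
      intro j hj
      rw [inner_sum]
      rw [Finset.sum_eq_single j]
      · rw [inner_smul_left, inner_smul_right, ← mul_assoc, ← Complex.normSq_eq_conj_mul_self,
          inner_self_eq_norm_sq_to_K, Complex.normSq_eq_norm_sq]
        norm_cast
        exact (Complex.ofReal_mul _ _).symm
      · intro b _ hbj
        rw [inner_smul_left, inner_smul_right, ortho j b (Ne.symm hbj), mul_zero, mul_zero]
      · intro h; exact absurd hj h
    rw [Finset.sum_congr rfl this]
    norm_cast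
  refine ⟨hsum, ?_⟩
  rw [hsum]
  apply Finset.sum_le_sum
  intro k _
  calc ‖γ k‖ ^ 2 * ‖(T ^ k) f‖ ^ 2 ≤ ‖γ k‖ ^ 2 * 1 := by
        apply mul_le_mul_of_nonneg_left _ (by positivity)
        have := hnorm k
        nlinarith [norm_nonneg ((T ^ k) f)]
    _ = ‖γ k‖ ^ 2 := mul_one _
end
end

section
/- Under the hypotheses of the main theorem, if f, g ∈ N = M ⊖ T_z(M) are orthogonal in M, then the product fg is orthogonal to f in M. -/
open scoped InnerProductSpace

noncomputable section

set_option maxHeartbeats 1000000 in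
/-- Under the hypotheses of the main theorem, if `f, g ∈ N = M ⊖ T_z(M)`
are orthogonal in `M`, then the product `fg` belongs to `M` and is orthogonal to `f`. -/
theorem stmt5
    {E : Type*} [NormedAddCommGroup E] [InnerProductSpace ℂ E] [CompleteSpace E]
    (J : E →ₗ[ℂ] PowerSeries ℂ) (hJinj : Function.Injective J)
    (hH2 : ∀ x : E, MemH2 (J x))
    (T : E →L[ℂ] E) (hT : ∀ x : E, J (T x) = PowerSeries.X * J x)
    (δ : ℝ) (hδ : 0 < δ)
    (hlow : ∀ x : E, δ * ‖x‖ ≤ ‖T x‖)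
    (hup : ∀ x : E, ‖T x‖ ≤ ‖x‖)
    (hadj : ∀ n : ℕ, ∀ x : E,
      ((ContinuousLinearMap.adjoint T) ^ n) ((T ^ (n + 1)) x) ∈ LinearMap.range (T : E →ₗ[ℂ] E))
    (f g : E) (hf : f ∈ (LinearMap.range (T : E →ₗ[ℂ] E))ᗮ) (hg : g ∈ (LinearMap.range (T : E →ₗ[ℂ] E))ᗮ)
    (hfg : ⟪f, g⟫_ℂ = 0) :
    ∃ p : E, J p = J f * J g ∧ ⟪p, f⟫_ℂ = 0 := by
  classical
  by_cases hg0 : g = 0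
  · refine ⟨0, ?_, by simp⟩
    simp [hg0, map_zero]
  -- basic facts about powers of T
  have hpow_apply : ∀ (n : ℕ) (x : E), (T ^ (n + 1)) x = T ((T ^ n) x) := by
    intro n x
    rw [pow_succ']
    rfl
  have hTpowlow : ∀ (n : ℕ) (x : E), δ ^ n * ‖x‖ ≤ ‖(T ^ n) x‖ := by
    intro n
    induction n with
    | zero => intro x; simp
    | succ n ih =>
      intro x
      have h1 : δ ^ (n + 1) * ‖x‖ = δ * (δ ^ n * ‖x‖) := by ring
      rw [h1, hpow_apply]
      calc δ * (δ ^ n * ‖x‖) ≤ δ * ‖(T ^ n) x‖ :=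
            mul_le_mul_of_nonneg_left (ih x) hδ.le
        _ ≤ ‖T ((T ^ n) x)‖ := hlow _
  have hTpowJ : ∀ (n : ℕ) (x : E), J ((T ^ n) x) = PowerSeries.X ^ n * J x := by
    intro n
    induction n with
    | zero => intro x; simp
    | succ n ih =>
      intro x
      rw [hpow_apply, hT, ih, pow_succ]
      ring
  have hgpos : 0 < ‖g‖ := norm_pos_iff.mpr hg0
  have hTgpos : ∀ n : ℕ, 0 < ‖(T ^ n) g‖ := by
    intro n
    calc (0:ℝ) < δ ^ n * ‖g‖ := mul_pos (pow_pos hδ n) hgpos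
      _ ≤ ‖(T ^ n) g‖ := hTpowlow n g
  -- range T perp facts
  have hgperp : ∀ u : E, u ∈ LinearMap.range (T : E →ₗ[ℂ] E) → ⟪g, u⟫_ℂ = 0 := by
    intro u hu
    rw [← inner_eq_zero_symm]
    exact (Submodule.mem_orthogonal _ g).mp hg u hu
  have hfperp : ∀ u : E, u ∈ LinearMap.range (T : E →ₗ[ℂ] E) → ⟪f, u⟫_ℂ = 0 := by
    intro u hu
    rw [← inner_eq_zero_symm]
    exact (Submodule.mem_orthogonal _ f).mp hf u hu
  -- pairwise orthogonality of T^n g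
  have key : ∀ m n : ℕ, m < n → ⟪(T ^ m) g, (T ^ n) g⟫_ℂ = 0 := by
    intro m n hmn
    have hadjpow : ContinuousLinearMap.adjoint (T ^ m) = (ContinuousLinearMap.adjoint T) ^ m := by
      rw [← ContinuousLinearMap.star_eq_adjoint, ← ContinuousLinearMap.star_eq_adjoint, star_pow]
    have h1 : ⟪(T ^ m) g, (T ^ n) g⟫_ℂ
        = ⟪g, (ContinuousLinearMap.adjoint (T ^ m)) ((T ^ n) g)⟫_ℂ := by
      rw [ContinuousLinearMap.adjoint_inner_right]
    rw [h1, hadjpow]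
    have hdecomp : (T ^ n) g = (T ^ (m + 1)) ((T ^ (n - m - 1)) g) := by
      have harith : (m + 1) + (n - m - 1) = n := by omega
      conv_lhs => rw [← harith]
      rw [pow_add, ContinuousLinearMap.mul_apply]
    rw [hdecomp]
    exact hgperp _ (hadj m ((T ^ (n - m - 1)) g))
  have horth : ∀ m n : ℕ, m ≠ n → ⟪(T ^ m) g, (T ^ n) g⟫_ℂ = 0 := by
    intro m n hmn
    rcases lt_or_gt_of_ne hmn with h | h
    · exact key m n h
    · rw [inner_eq_zero_symm]
      exact key n m h
  -- orthonormal family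
  set e : ℕ → E := fun n => ((‖(T ^ n) g‖ : ℂ))⁻¹ • (T ^ n) g with he_def
  have he : Orthonormal ℂ e := by
    constructor
    · intro n
      rw [he_def]
      simp only [norm_smul, norm_inv, Complex.norm_real, norm_norm]
      rw [inv_mul_cancel₀ (hTgpos n).ne']
    · intro m n hmn
      simp only [he_def, inner_smul_left, inner_smul_right]
      rw [horth m n hmn]
      ring
  -- the coefficients
  set c : ℕ → ℂ := fun n => coefn (J f) n with hc_def
  set a : ℕ → E := fun n => c n • (T ^ n) g with ha_def
  have ha_eq : ∀ n, a n = (c n * (‖(T ^ n) g‖ : ℂ)) • e n := by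
    intro n
    rw [ha_def, he_def]
    simp only [smul_smul]
    congr 1
    rw [mul_assoc, mul_inv_cancel₀]
    · ring
    · exact_mod_cast (hTgpos n).ne'
  -- summability
  have hV := he.orthogonalFamily
  have hsummable : Summable a := by
    have h2 : Summable (fun n => ‖c n * (‖(T ^ n) g‖ : ℂ)‖ ^ 2) := by
      apply Summable.of_nonneg_of_le (f := fun n => ‖c n‖ ^ 2 * ‖g‖ ^ 2)
        (fun n => by positivity)
      · intro n
        have h3 : ‖(T ^ n) g‖ ≤ ‖g‖ := by
          induction n with
          | zero => simp
          | succ k ih =>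
            rw [hpow_apply]
            exact le_trans (hup _) ih
        have h4 : ‖c n * (‖(T ^ n) g‖ : ℂ)‖ = ‖c n‖ * ‖(T ^ n) g‖ := by
          rw [norm_mul, Complex.norm_real, Real.norm_eq_abs, abs_of_nonneg (norm_nonneg _)]
        rw [h4, mul_pow]
        exact mul_le_mul_of_nonneg_left (pow_le_pow_left₀ (norm_nonneg _) h3 2)
          (sq_nonneg _)
      · exact (hH2 f).mul_right _
    have h5 := (hV.summable_iff_norm_sq_summable
      (fun n => c n * (‖(T ^ n) g‖ : ℂ))).mpr h2
    have h6 : (fun n => (LinearIsometry.toSpanSingleton ℂ E (he.1 n))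
        (c n * (‖(T ^ n) g‖ : ℂ))) = a := by
      funext n
      rw [ha_eq n]
      rfl
    rwa [h6] at h5
  set p : E := ∑' n, a n with hp_def
  refine ⟨p, ?_, ?_⟩
  · -- J p = J f * J g, coefficientwise
    ext m
    -- split the sum
    have hsplit : (∑ i ∈ Finset.range (m + 1), a i) + ∑' i, a (i + (m + 1)) = p :=
      Summable.sum_add_tsum_nat_add (m + 1) hsummable
    -- tail is in range of T^(m+1)
    have htail_summable : Summable (fun i => a (i + (m + 1))) :=
      (summable_nat_add_iff (m + 1)).mpr hsummable
    have hclosed : IsClosed (Set.range (⇑(T ^ (m + 1)) : E → E)) := by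
      have hanti : AntilipschitzWith ((δ ^ (m + 1))⁻¹).toNNReal (⇑(T ^ (m + 1)) : E → E) := by
        apply AntilipschitzWith.of_le_mul_dist
        intro x y
        rw [dist_eq_norm, dist_eq_norm, ← map_sub]
        have h7 := hTpowlow (m + 1) (x - y)
        have h8 : (0:ℝ) < δ ^ (m + 1) := pow_pos hδ _
        have h9 : (((δ ^ (m + 1))⁻¹).toNNReal : ℝ) = (δ ^ (m + 1))⁻¹ := by
          rw [Real.coe_toNNReal]
          positivity
        rw [h9]
        calc ‖x - y‖ = (δ ^ (m + 1))⁻¹ * (δ ^ (m + 1) * ‖x - y‖) := by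
              field_simp
          _ ≤ (δ ^ (m + 1))⁻¹ * ‖(T ^ (m + 1)) (x - y)‖ :=
              mul_le_mul_of_nonneg_left h7 (by positivity)
      exact hanti.isClosed_range (T ^ (m + 1)).uniformContinuous
    have htail_mem : (∑' i, a (i + (m + 1))) ∈ Set.range (⇑(T ^ (m + 1)) : E → E) := by
      have hterm : ∀ i, a (i + (m + 1)) = (T ^ (m + 1)) (c (i + (m + 1)) • (T ^ i) g) := by
        intro i
        rw [ha_def]
        simp only [map_smul]
        congr 1
        rw [add_comm i (m + 1), pow_add]
        rfl
      have hts := htail_summable.hasSum.tendsto_sum_nat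
      apply hclosed.mem_of_tendsto hts
      filter_upwards with k
      refine ⟨∑ i ∈ Finset.range k, c (i + (m + 1)) • (T ^ i) g, ?_⟩
      rw [map_sum]
      exact (Finset.sum_congr rfl fun i _ => hterm i).symm
    obtain ⟨w, hw⟩ := htail_mem
    have hpw : p = (∑ i ∈ Finset.range (m + 1), a i) + (T ^ (m + 1)) w := by
      rw [← hsplit, hw]
    rw [hpw]
    rw [map_add, map_sum]
    rw [hTpowJ (m + 1) w]
    rw [map_add]
    have hcoeff_tail : (PowerSeries.coeff m) (PowerSeries.X ^ (m + 1) * J w) = 0 := by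
      rw [PowerSeries.coeff_X_pow_mul']
      simp
    rw [hcoeff_tail, add_zero]
    have hcoeff_sum : ∀ i ∈ Finset.range (m + 1),
        (PowerSeries.coeff m) (J (a i)) = c i * (PowerSeries.coeff (m - i)) (J g) := by
      intro i hi
      rw [ha_def]
      simp only [map_smul, hTpowJ]
      rw [PowerSeries.coeff_X_pow_mul']
      rw [if_pos (Nat.lt_succ_iff.mp (Finset.mem_range.mp hi))]
      rfl
    rw [map_sum, Finset.sum_congr rfl hcoeff_sum]
    rw [PowerSeries.coeff_mul]
    rw [Finset.Nat.sum_antidiagonal_eq_sum_range_succ_mk]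
    rfl
  · -- inner product with f is zero
    have hfp : ⟪f, p⟫_ℂ = 0 := by
      have h10 : HasSum (fun n => ⟪f, a n⟫_ℂ) ⟪f, p⟫_ℂ := by
        have := (innerSL ℂ f).hasSum hsummable.hasSum
        exact this
      have h11 : ∀ n, ⟪f, a n⟫_ℂ = 0 := by
        intro n
        rw [ha_def]
        simp only [inner_smul_right]
        rcases Nat.eq_zero_or_pos n with h | h
        · subst h
          simp only [pow_zero, ContinuousLinearMap.one_apply]
          rw [hfg, mul_zero]
        · have : (T ^ n) g ∈ LinearMap.range (T : E →ₗ[ℂ] E) := by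
            obtain ⟨k, rfl⟩ := Nat.exists_eq_succ_of_ne_zero h.ne'
            exact ⟨(T ^ k) g, (hpow_apply k g).symm⟩
          rw [hfperp _ this, mul_zero]
      rw [funext h11] at h10
      exact (hasSum_zero.unique h10).symm
    rw [← inner_conj_symm, hfp, map_zero]
end
end

section
/- Under the hypotheses of the main theorem, if f, g are orthogonal nonzero elements of N = M ⊖ T_z(M), then f(0) = 0 and g(0) = 0. -/
open scoped InnerProductSpace

noncomputable section

section Aux

variable {E : Type*} [NormedAddCommGroup E] [InnerProductSpace ℂ E] [CompleteSpace E]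

omit [CompleteSpace E] in
private lemma J_pow_apply (J : E →ₗ[ℂ] PowerSeries ℂ) (T : E →L[ℂ] E)
    (hT : ∀ x : E, J (T x) = PowerSeries.X * J x) : ∀ (n : ℕ) (x : E),
    J ((T ^ n) x) = PowerSeries.X ^ n * J x := by
  intro n
  induction n with
  | zero => intro x; simp
  | succ n ih =>
    intro x
    rw [pow_succ, ContinuousLinearMap.mul_apply, ih, hT, ← mul_assoc, ← pow_succ]

set_option maxHeartbeats 1000000 in
private lemma key (J : E →ₗ[ℂ] PowerSeries ℂ)
    (hH2 : ∀ x : E, MemH2 (J x))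
    (T : E →L[ℂ] E) (hT : ∀ x : E, J (T x) = PowerSeries.X * J x)
    (δ : ℝ) (hδ : 0 < δ)
    (hlow : ∀ x : E, δ * ‖x‖ ≤ ‖T x‖)
    (hup : ∀ x : E, ‖T x‖ ≤ ‖x‖)
    (hadj : ∀ n : ℕ, ∀ x : E,
      ((ContinuousLinearMap.adjoint T) ^ n) ((T ^ (n + 1)) x) ∈ LinearMap.range (T : E →ₗ[ℂ] E))
    (x y : E) (hx0 : x ≠ 0) (hx : x ∈ (LinearMap.range (T : E →ₗ[ℂ] E))ᗮ) :
    ∃ q : E, J q = J y * J x ∧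
      ∀ w : E, w ∈ (LinearMap.range (T : E →ₗ[ℂ] E))ᗮ → ⟪w, q⟫_ℂ = coefn (J y) 0 * ⟪w, x⟫_ℂ := by
  classical
  -- upper bounds for powers
  have hTn_up : ∀ (n : ℕ) (z : E), ‖(T ^ n) z‖ ≤ ‖z‖ := by
    intro n
    induction n with
    | zero => intro z; simp
    | succ n ih =>
      intro z
      rw [pow_succ, ContinuousLinearMap.mul_apply]
      exact (ih (T z)).trans (hup z)
  -- lower bounds: powers of T applied to x are nonzero
  have hTn_pos : ∀ n : ℕ, 0 < ‖(T ^ n) x‖ := by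
    intro n
    induction n with
    | zero => simpa [norm_pos_iff] using hx0
    | succ n ih =>
      rw [pow_succ', ContinuousLinearMap.mul_apply]
      calc (0:ℝ) < δ * ‖(T ^ n) x‖ := mul_pos hδ ih
        _ ≤ ‖T ((T ^ n) x)‖ := hlow _
  -- moving powers of T to the other side of the inner product
  have hadj_inner : ∀ (n : ℕ) (z u : E),
      ⟪(T ^ n) z, u⟫_ℂ = ⟪z, ((ContinuousLinearMap.adjoint T) ^ n) u⟫_ℂ := by
    intro n
    induction n with
    | zero => intro z u; simp
    | succ n ih =>
      intro z u
      rw [pow_succ', ContinuousLinearMap.mul_apply,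
        ← ContinuousLinearMap.adjoint_inner_right, ih, pow_succ,
        ContinuousLinearMap.mul_apply]
  -- orthogonality of the family (T^n x)
  have horth_lt : ∀ m n : ℕ, m < n → ⟪(T ^ m) x, (T ^ n) x⟫_ℂ = 0 := by
    intro m n hmn
    obtain ⟨j, rfl⟩ : ∃ j, n = (m + 1) + j := ⟨n - (m + 1), by omega⟩
    rw [pow_add, ContinuousLinearMap.mul_apply, hadj_inner]
    exact (Submodule.mem_orthogonal' _ _).mp hx _ (hadj m ((T ^ j) x))
  have horth : ∀ m n : ℕ, m ≠ n → ⟪(T ^ m) x, (T ^ n) x⟫_ℂ = 0 := by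
    intro m n hmn
    rcases lt_or_gt_of_ne hmn with h | h
    · exact horth_lt m n h
    · rw [← inner_conj_symm, horth_lt n m h, map_zero]
  -- summability of series with ℓ² coefficients
  have hsummable : ∀ c : ℕ → ℂ, Summable (fun n => ‖c n‖ ^ 2) →
      Summable (fun n => c n • (T ^ n) x) := by
    intro c hc
    set u : ℕ → E := fun n => ((‖(T ^ n) x‖ : ℂ))⁻¹ • (T ^ n) x with hu
    have hunorm : ∀ n, ‖u n‖ = 1 := by
      intro n
      rw [hu]
      rw [norm_smul, norm_inv, Complex.norm_real, Real.norm_eq_abs,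
        abs_of_nonneg (norm_nonneg _)]
      exact inv_mul_cancel₀ (hTn_pos n).ne'
    set V : ∀ _ : ℕ, ℂ →ₗᵢ[ℂ] E := fun n => LinearIsometry.toSpanSingleton ℂ E (hunorm n)
      with hV'
    have hV : OrthogonalFamily ℂ (fun _ : ℕ => ℂ) V := by
      intro i j hij a b
      simp only [hV', LinearIsometry.toSpanSingleton_apply, hu, inner_smul_left,
        inner_smul_right, horth i j hij, mul_zero]
    have happ : ∀ n, V n (c n * (‖(T ^ n) x‖ : ℂ)) = c n • (T ^ n) x := by
      intro n
      rw [hV']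
      rw [LinearIsometry.toSpanSingleton_apply, hu, smul_smul, mul_assoc,
        mul_inv_cancel₀ (by exact_mod_cast (hTn_pos n).ne'), mul_one]
    have hVsum : Summable (fun n => V n (c n * (‖(T ^ n) x‖ : ℂ))) := by
      rw [hV.summable_iff_norm_sq_summable]
      refine Summable.of_nonneg_of_le (fun n => by positivity) (fun n => ?_)
        (hc.mul_right (‖x‖ ^ 2))
      rw [norm_mul, mul_pow, Complex.norm_real, Real.norm_eq_abs,
        abs_of_nonneg (norm_nonneg _)]
      have h1 : (0:ℝ) ≤ ‖c n‖ ^ 2 := by positivity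
      have h2 : ‖(T ^ n) x‖ ^ 2 ≤ ‖x‖ ^ 2 := by
        have := hTn_up n x
        nlinarith [norm_nonneg ((T ^ n) x)]
      nlinarith
    exact (summable_congr happ).mp hVsum
  set c : ℕ → ℂ := fun n => coefn (J y) n with hcdef
  have hc : Summable fun n => ‖c n‖ ^ 2 := hH2 y
  have hv : Summable (fun n => c n • (T ^ n) x) := hsummable c hc
  set q : E := ∑' n, c n • (T ^ n) x with hq
  refine ⟨q, ?_, ?_⟩
  · -- J q = J y * J x
    apply PowerSeries.ext
    intro k
    have hwsum : Summable (fun i => c (i + (k+1)) • (T ^ i) x) :=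
      hsummable _ ((summable_nat_add_iff (f := fun n => ‖c n‖ ^ 2) (k+1)).mpr hc)
    have htail : (∑' i, c (i + (k+1)) • (T ^ (i + (k+1))) x)
        = (T ^ (k+1)) (∑' i, c (i + (k+1)) • (T ^ i) x) := by
      rw [ContinuousLinearMap.map_tsum _ hwsum]
      refine tsum_congr fun i => ?_
      rw [map_smul]
      congr 1
      rw [add_comm i (k+1), pow_add, ContinuousLinearMap.mul_apply]
    have hqeq : q = (∑ i ∈ Finset.range (k+1), c i • (T ^ i) x)
        + (T ^ (k+1)) (∑' i, c (i + (k+1)) • (T ^ i) x) := by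
      rw [hq, ← hv.sum_add_tsum_nat_add (k+1), htail]
    have hJq : J q = (∑ i ∈ Finset.range (k+1), c i • (PowerSeries.X ^ i * J x))
        + PowerSeries.X ^ (k+1) * J (∑' i, c (i + (k+1)) • (T ^ i) x) := by
      rw [hqeq, map_add, map_sum, J_pow_apply J T hT]
      congr 1
      exact Finset.sum_congr rfl fun i _ => by rw [map_smul, J_pow_apply J T hT]
    rw [hJq, map_add, map_sum, PowerSeries.coeff_X_pow_mul', if_neg (by omega), add_zero,
      PowerSeries.coeff_mul, Finset.Nat.sum_antidiagonal_eq_sum_range_succ_mk]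
    refine Finset.sum_congr rfl fun i hi => ?_
    rw [Finset.mem_range] at hi
    rw [map_smul, smul_eq_mul, PowerSeries.coeff_X_pow_mul', if_pos (by omega)]
    rfl
  · -- inner products against elements orthogonal to the range of T
    intro w hw
    have h1 : ⟪w, q⟫_ℂ = ∑' n, ⟪w, c n • (T ^ n) x⟫_ℂ := by
      rw [hq]
      simpa only [innerSL_apply_apply] using (innerSL ℂ w).map_tsum hv
    rw [h1, tsum_eq_single 0 ?_]
    · simp [hcdef, inner_smul_right]
    · intro n hn
      obtain ⟨j, rfl⟩ : ∃ j, n = j + 1 := ⟨n - 1, by omega⟩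
      rw [inner_smul_right]
      have hmem : (T ^ (j+1)) x ∈ LinearMap.range (T : E →ₗ[ℂ] E) :=
        ⟨(T ^ j) x, by rw [pow_succ']; rfl⟩
      rw [(Submodule.mem_orthogonal' _ _).mp hw _ hmem, mul_zero]

end Aux

/-- Under the hypotheses of the main theorem, two orthogonal nonzero
elements `f, g` of `N = M ⊖ T_z(M)` both vanish at `0`. -/
theorem stmt6
    {E : Type*} [NormedAddCommGroup E] [InnerProductSpace ℂ E] [CompleteSpace E]
    (J : E →ₗ[ℂ] PowerSeries ℂ) (hJinj : Function.Injective J)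
    (hH2 : ∀ x : E, MemH2 (J x))
    (T : E →L[ℂ] E) (hT : ∀ x : E, J (T x) = PowerSeries.X * J x)
    (δ : ℝ) (hδ : 0 < δ)
    (hlow : ∀ x : E, δ * ‖x‖ ≤ ‖T x‖)
    (hup : ∀ x : E, ‖T x‖ ≤ ‖x‖)
    (hadj : ∀ n : ℕ, ∀ x : E,
      ((ContinuousLinearMap.adjoint T) ^ n) ((T ^ (n + 1)) x) ∈ LinearMap.range (T : E →ₗ[ℂ] E))
    (f g : E) (hf : f ∈ (LinearMap.range (T : E →ₗ[ℂ] E))ᗮ) (hg : g ∈ (LinearMap.range (T : E →ₗ[ℂ] E))ᗮ)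
    (hf0 : f ≠ 0) (hg0 : g ≠ 0) (hfg : ⟪f, g⟫_ℂ = 0) :
    coefn (J f) 0 = 0 ∧ coefn (J g) 0 = 0 := by
  obtain ⟨q, hq, hqin⟩ := key J hH2 T hT δ hδ hlow hup hadj f g hf0 hf
  obtain ⟨q', hq', hq'in⟩ := key J hH2 T hT δ hδ hlow hup hadj g f hg0 hg
  have hqq : q = q' := hJinj (by rw [hq, hq', mul_comm])
  have hgf : ⟪g, f⟫_ℂ = 0 := by rw [← inner_conj_symm, hfg, map_zero]
  have key1 : coefn (J g) 0 * ⟪f, f⟫_ℂ = coefn (J f) 0 * ⟪f, g⟫_ℂ := by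
    rw [← hqin f hf, hqq, hq'in f hf]
  have key2 : coefn (J g) 0 * ⟪g, f⟫_ℂ = coefn (J f) 0 * ⟪g, g⟫_ℂ := by
    rw [← hqin g hg, hqq, hq'in g hg]
  rw [hfg, mul_zero] at key1
  rw [hgf, mul_zero] at key2
  constructor
  · rcases mul_eq_zero.mp key2.symm with h | h
    · exact h
    · exact absurd (inner_self_eq_zero.mp h) hg0
  · rcases mul_eq_zero.mp key1 with h | h
    · exact h
    · exact absurd (inner_self_eq_zero.mp h) hf0
end
end

section
/- Under the hypotheses of the main theorem with M containing a function nonvanishing at 0, let b ∈ N with ‖b‖_M = 1, where N = M ⊖ T_z(M) is one-dimensional. Then bH² is dense in M: any h ∈ M orthogonal to bzⁿ for all n ≥ 0 lies in ∩ₙ T_zⁿ(M) = {0}. -/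
open scoped InnerProductSpace

noncomputable section

lemma memH2_add {f g : PowerSeries ℂ} (hf : MemH2 f) (hg : MemH2 g) : MemH2 (f + g) := by
  refine Summable.of_nonneg_of_le (fun n => by positivity) (fun n => ?_)
    ((hf.mul_left 2).add (hg.mul_left 2))
  have h : coefn (f + g) n = coefn f n + coefn g n := by simp [coefn]
  rw [h]
  nlinarith [norm_add_le (coefn f n) (coefn g n), norm_nonneg (coefn f n),
    norm_nonneg (coefn g n), sq_nonneg (‖coefn f n‖ - ‖coefn g n‖),
    norm_nonneg (coefn f n + coefn g n)]

lemma memH2_smul (c : ℂ) {f : PowerSeries ℂ} (hf : MemH2 f) : MemH2 (c • f) := by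
  have h : ∀ n, ‖coefn (c • f) n‖ ^ 2 = ‖c‖ ^ 2 * ‖coefn f n‖ ^ 2 := by
    intro n
    have : coefn (c • f) n = c * coefn f n := by simp [coefn]
    rw [this, norm_mul, mul_pow]
  rw [MemH2]
  exact (hf.mul_left (‖c‖ ^ 2)).congr (fun n => (h n).symm)

lemma memH2_X_pow (n : ℕ) : MemH2 (PowerSeries.X ^ n) := by
  rw [MemH2]
  refine summable_of_ne_finset_zero (s := {n}) (fun m hm => ?_)
  rw [Finset.mem_singleton] at hm
  rw [coefn, PowerSeries.coeff_X_pow, if_neg hm, norm_zero]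
  norm_num

/-- Under the hypotheses of the main theorem, with `M` containing a function
nonvanishing at `0` and `b` a unit vector in the one-dimensional space `N = M ⊖ T_z(M)`,
the set `bH²` is dense in `M`; indeed any `h ∈ M` orthogonal to every `bzⁿ = T_zⁿ b`
is zero. -/
theorem stmt8
    {E : Type*} [NormedAddCommGroup E] [InnerProductSpace ℂ E] [CompleteSpace E]
    (J : E →ₗ[ℂ] PowerSeries ℂ) (hJinj : Function.Injective J)
    (hH2 : ∀ x : E, MemH2 (J x))
    (T : E →L[ℂ] E) (hT : ∀ x : E, J (T x) = PowerSeries.X * J x)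
    (δ : ℝ) (hδ : 0 < δ)
    (hlow : ∀ x : E, δ * ‖x‖ ≤ ‖T x‖)
    (hup : ∀ x : E, ‖T x‖ ≤ ‖x‖)
    (hadj : ∀ n : ℕ, ∀ x : E,
      ((ContinuousLinearMap.adjoint T) ^ n) ((T ^ (n + 1)) x) ∈ LinearMap.range (T : E →ₗ[ℂ] E))
    (hnv : ∃ x : E, coefn (J x) 0 ≠ 0)
    (hdim : Module.finrank ℂ ((LinearMap.range (T : E →ₗ[ℂ] E))ᗮ : Submodule ℂ E) = 1)
    (b : E) (hb : b ∈ (LinearMap.range (T : E →ₗ[ℂ] E))ᗮ) (hb1 : ‖b‖ = 1) :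
    (∀ h : E, (∀ n : ℕ, ⟪(T ^ n) b, h⟫_ℂ = 0) → h = 0) ∧
    Dense {x : E | ∃ g : PowerSeries ℂ, MemH2 g ∧ J x = J b * g} := by
  -- basic facts
  have hbne : b ≠ 0 := by
    intro h; rw [h, norm_zero] at hb1; norm_num at hb1
  -- T is antilipschitz, hence has closed range
  have hanti : AntilipschitzWith (⟨δ, hδ.le⟩ : NNReal)⁻¹ T := by
    refine AntilipschitzWith.of_le_mul_dist (fun x y => ?_)
    have := hlow (x - y)
    simp only [dist_eq_norm, ← map_sub]
    show ‖x - y‖ ≤ δ⁻¹ * ‖T (x - y)‖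
    rw [inv_mul_eq_div, le_div_iff₀ hδ]
    linarith [this]
  have hclosed : IsClosed ((LinearMap.range (T : E →ₗ[ℂ] E) : Submodule ℂ E) : Set E) := by
    have : IsClosed (Set.range T) := hanti.isClosed_range T.uniformContinuous
    convert this using 1
    ext; simp
  haveI : CompleteSpace (LinearMap.range (T : E →ₗ[ℂ] E) : Submodule ℂ E) :=
    hclosed.completeSpace_coe
  -- every element of (range T)ᗮ is a multiple of b
  have hspan : ∀ y ∈ (LinearMap.range (T : E →ₗ[ℂ] E))ᗮ, ∃ c : ℂ, y = c • b := by
    have := (finrank_eq_one_iff_of_nonzero' (V := ((LinearMap.range (T : E →ₗ[ℂ] E))ᗮ : Submodule ℂ E))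
      ⟨b, hb⟩ (by simpa using hbne)).mp hdim
    intro y hy
    obtain ⟨c, hc⟩ := this ⟨y, hy⟩
    exact ⟨c, by simpa using congrArg Subtype.val hc.symm⟩
  -- adjoint pairing
  have hpair : ∀ n : ℕ, ∀ x y : E,
      ⟪(T ^ n) x, y⟫_ℂ = ⟪x, ((ContinuousLinearMap.adjoint T) ^ n) y⟫_ℂ := by
    intro n
    induction n with
    | zero => intro x y; simp
    | succ n ih =>
      intro x y
      rw [pow_succ, ContinuousLinearMap.mul_apply, ih (T x) y,
        ← ContinuousLinearMap.adjoint_inner_right, pow_succ',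
        ContinuousLinearMap.mul_apply]
  -- lower bound on iterates
  have hlown : ∀ n : ℕ, ∀ x : E, δ ^ n * ‖x‖ ≤ ‖(T ^ n) x‖ := by
    intro n
    induction n with
    | zero => intro x; simp
    | succ n ih =>
      intro x
      calc δ ^ (n + 1) * ‖x‖ = δ ^ n * (δ * ‖x‖) := by ring
        _ ≤ δ ^ n * ‖T x‖ := by
            exact mul_le_mul_of_nonneg_left (hlow x) (by positivity)
        _ ≤ ‖(T ^ n) (T x)‖ := ih (T x)
        _ = ‖(T ^ (n + 1)) x‖ := by rw [pow_succ, ContinuousLinearMap.mul_apply]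
  have hTnb : ∀ n : ℕ, (T ^ n) b ≠ 0 := by
    intro n h
    have := hlown n b
    rw [h, norm_zero, hb1, mul_one] at this
    exact absurd this (not_le.mpr (by positivity))
  -- key induction: orthogonality to T^k b for k ≤ n puts h in range (T^(n+1))
  have key : ∀ h : E, (∀ n : ℕ, ⟪(T ^ n) b, h⟫_ℂ = 0) →
      ∀ n : ℕ, ∃ g : E, (T ^ n) g = h := by
    intro h horth n
    induction n with
    | zero => exact ⟨h, by simp⟩
    | succ n ih =>
      obtain ⟨g, hg⟩ := ih
      -- decompose g = w + v with w ∈ range T, v ∈ (range T)ᗮ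
      obtain ⟨w, hw, v, hv, hgwv⟩ :=
        (LinearMap.range (T : E →ₗ[ℂ] E) : Submodule ℂ E).exists_add_mem_mem_orthogonal g
      obtain ⟨c, rfl⟩ := hspan v hv
      obtain ⟨u, hu⟩ := hw
      -- h = T^n w + c • T^n b = T^(n+1) u + c • T^n b
      have hh : h = (T ^ (n + 1)) u + c • (T ^ n) b := by
        rw [← hg, hgwv, map_add, map_smul, ← hu, ContinuousLinearMap.coe_coe, pow_succ,
          ContinuousLinearMap.mul_apply]
      -- inner product with T^n b
      have h1 : ⟪(T ^ n) b, (T ^ (n + 1)) u⟫_ℂ = 0 := by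
        rw [hpair n b ((T ^ (n + 1)) u)]
        obtain ⟨z, hz⟩ := hadj n u
        rw [← hz]
        have hz0 : ⟪T z, b⟫_ℂ = 0 :=
          (Submodule.mem_orthogonal (LinearMap.range (T : E →ₗ[ℂ] E)) b).mp hb (T z) ⟨z, rfl⟩
        rw [← inner_conj_symm, ContinuousLinearMap.coe_coe, hz0, map_zero]
      have h2 := horth n
      rw [hh, inner_add_right, h1, zero_add, inner_smul_right] at h2
      have h3 : (⟪(T ^ n) b, (T ^ n) b⟫_ℂ : ℂ) ≠ 0 := by
        exact inner_self_ne_zero (𝕜 := ℂ) |>.mpr (hTnb n)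
      have hc0 : c = 0 := by
        rcases mul_eq_zero.mp h2 with h | h
        · exact h
        · exact absurd h h3
      exact ⟨u, by rw [hh, hc0, zero_smul, add_zero]⟩
  -- divisibility
  have hdiv : ∀ n : ℕ, ∀ x : E, J ((T ^ n) x) = PowerSeries.X ^ n * J x := by
    intro n
    induction n with
    | zero => intro x; simp
    | succ n ih =>
      intro x
      rw [pow_succ, ContinuousLinearMap.mul_apply, ih (T x), hT, pow_succ]
      ring
  -- part 1
  have part1 : ∀ h : E, (∀ n : ℕ, ⟪(T ^ n) b, h⟫_ℂ = 0) → h = 0 := by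
    intro h horth
    have hcoef : ∀ m : ℕ, PowerSeries.coeff m (J h) = 0 := by
      intro m
      obtain ⟨g, hg⟩ := key h horth (m + 1)
      have : (PowerSeries.X : PowerSeries ℂ) ^ (m + 1) ∣ J h := by
        rw [← hg, hdiv]; exact Dvd.intro _ rfl
      exact PowerSeries.X_pow_dvd_iff.mp this m (Nat.lt_succ_self m)
    have : J h = 0 := PowerSeries.ext fun m => by rw [hcoef m, map_zero]
    exact hJinj (by rw [this, map_zero])
  refine ⟨part1, ?_⟩
  -- part 2: density
  set S : Set E := {x : E | ∃ g : PowerSeries ℂ, MemH2 g ∧ J x = J b * g} with hS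
  set D : Submodule ℂ E := Submodule.span ℂ (Set.range fun n : ℕ => (T ^ n) b) with hD
  have hDsub : (D : Set E) ⊆ S := by
    intro x hx
    refine Submodule.span_induction ?_ ?_ ?_ ?_ hx
    · rintro y ⟨n, rfl⟩
      exact ⟨PowerSeries.X ^ n, memH2_X_pow n, by rw [hdiv n b]; ring⟩
    · exact ⟨0, by simpa [MemH2, coefn] using summable_zero, by simp⟩
    · rintro y z - - ⟨gy, hgy, hy⟩ ⟨gz, hgz, hz⟩
      exact ⟨gy + gz, memH2_add hgy hgz, by rw [map_add, hy, hz, mul_add]⟩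
    · rintro c y - ⟨gy, hgy, hy⟩
      exact ⟨c • gy, memH2_smul c hgy, by
        rw [map_smul, hy]; exact (mul_smul_comm c (J b) gy).symm⟩
  have hDdense : Dense (D : Set E) := by
    have horthbot : Dᗮ = ⊥ := by
      rw [Submodule.eq_bot_iff]
      intro x hx
      refine part1 x fun n => ?_
      exact ((Submodule.mem_orthogonal D x).mp hx) _
        (Submodule.subset_span ⟨n, rfl⟩)
    have := Submodule.topologicalClosure_eq_top_iff (K := D) |>.mpr horthbot
    rw [Submodule.dense_iff_topologicalClosure_eq_top]
    exact this
  exact hDdense.mono hDsub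
end
end

section
/- Let βₙ = 2^{-n/2} for n even and βₙ = 2^{-(n-1)/2} for n odd. Then T_z on H²(β) satisfies the hypotheses of the main theorem (there is δ>0 with δ‖f‖ ≤ ‖T_z f‖ ≤ ‖f‖, and T_z*ⁿT_z^{n+1}(H²(β)) ⊆ T_z(H²(β))), but T_z fails Shimorin's condition ‖T²x‖² + ‖x‖² ≤ 2‖Tx‖² for some x ∈ H²(β). -/
open scoped InnerProductSpace
noncomputable section

/-- The weight sequence `βₙ = 2^{-n/2}` for even `n`, `βₙ = 2^{-(n-1)/2}` for odd `n`. -/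
def shimBeta (n : ℕ) : ℝ :=
  if Even n then (2 : ℝ) ^ (-(n : ℝ) / 2) else (2 : ℝ) ^ (-((n : ℝ) - 1) / 2)

lemma shimBeta_pos (n : ℕ) : 0 < shimBeta n := by
  unfold shimBeta; split <;> positivity

lemma shimBeta_succ (n : ℕ) :
    shimBeta (n + 1) = if Even n then shimBeta n else shimBeta n / 2 := by
  rcases Nat.even_or_odd n with h | h
  · have h1 : ¬ Even (n + 1) := by simpa [Nat.even_add_one] using h
    simp only [shimBeta, if_pos h, if_neg h1]
    congr 1; push_cast; ring
  · have h0 : ¬ Even n := Nat.not_even_iff_odd.mpr h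
    have h1 : Even (n + 1) := by simpa [Nat.even_add_one] using h0
    simp only [shimBeta, if_pos h1, if_neg h0]
    rw [eq_div_iff (two_ne_zero)]
    have : (2:ℝ) = (2:ℝ) ^ (1:ℝ) := by norm_num
    nth_rewrite 3 [this]
    rw [← Real.rpow_add (by norm_num)]
    congr 1; push_cast; ring

lemma shimBeta_succ_le (n : ℕ) : shimBeta (n + 1) ≤ shimBeta n := by
  rw [shimBeta_succ]; split
  · exact le_rfl
  · linarith [shimBeta_pos n]

lemma shimBeta_le_two_succ (n : ℕ) : shimBeta n ≤ 2 * shimBeta (n + 1) := by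
  rw [shimBeta_succ]; split
  · linarith [shimBeta_pos n]
  · linarith [shimBeta_pos n]

lemma shim_pyth {V : Type*} [NormedAddCommGroup V] [InnerProductSpace ℂ V]
    (m : ℕ → V) (hmnorm : ∀ n, ‖m n‖ = shimBeta n)
    (hmorth : ∀ i j, i ≠ j → ⟪m i, m j⟫_ℂ = 0)
    (s : Finset ℕ) (g : ℕ → ℂ) (φ : ℕ → ℕ) (hφ : Function.Injective φ) :
    ‖∑ n ∈ s, g n • m (φ n)‖ ^ 2 = ∑ n ∈ s, ‖g n‖ ^ 2 * shimBeta (φ n) ^ 2 := by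
  have key : (⟪∑ n ∈ s, g n • m (φ n), ∑ n ∈ s, g n • m (φ n)⟫_ℂ)
      = ((∑ n ∈ s, ‖g n‖ ^ 2 * shimBeta (φ n) ^ 2 : ℝ) : ℂ) := by
    rw [sum_inner]
    push_cast
    refine Finset.sum_congr rfl fun n hn => ?_
    rw [inner_sum]
    rw [Finset.sum_eq_single n]
    · rw [inner_smul_left, inner_smul_right, inner_self_eq_norm_sq_to_K, hmnorm]
      rw [← mul_assoc, RCLike.conj_mul]
      norm_cast
    · intro k hk hkn
      rw [inner_smul_left, inner_smul_right, hmorth _ _ (fun h => hkn (hφ h).symm)]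
      ring
    · intro h; exact absurd hn h
  rw [inner_self_eq_norm_sq_to_K (𝕜 := ℂ)] at key
  exact Complex.ofReal_injective (by push_cast at key ⊢; exact key)

/-- With `βₙ = 2^{-n/2}` (`n` even), `βₙ = 2^{-(n-1)/2}` (`n` odd), the
operator `T_z` on `H²(β)` (modelled abstractly via orthogonal monomials `m n` of norm
`β n` with dense span) satisfies the hypotheses of the main theorem — there is `δ > 0`
with `δ‖f‖ ≤ ‖T_z f‖ ≤ ‖f‖` and `T_z*ⁿ T_z^{n+1}(H²(β)) ⊆ T_z(H²(β))` — but fails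
Shimorin's condition `‖T²x‖² + ‖x‖² ≤ 2‖Tx‖²` for some `x`. -/
theorem stmt14
    {V : Type*} [NormedAddCommGroup V] [InnerProductSpace ℂ V] [CompleteSpace V]
    (m : ℕ → V) (hmnorm : ∀ n, ‖m n‖ = shimBeta n)
    (hmorth : ∀ i j, i ≠ j → ⟪m i, m j⟫_ℂ = 0)
    (hmdense : (Submodule.span ℂ (Set.range m)).topologicalClosure = ⊤)
    (Tz : V →L[ℂ] V) (hTz : ∀ n, Tz (m n) = m (n + 1)) :
    (∃ δ : ℝ, 0 < δ ∧ ∀ f : V, δ * ‖f‖ ≤ ‖Tz f‖ ∧ ‖Tz f‖ ≤ ‖f‖) ∧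
    (∀ n : ℕ, ∀ x : V,
      ((ContinuousLinearMap.adjoint Tz) ^ n) ((Tz ^ (n + 1)) x) ∈ LinearMap.range (Tz : V →ₗ[ℂ] V)) ∧
    (∃ x : V, ¬ (‖(Tz ^ 2) x‖ ^ 2 + ‖x‖ ^ 2 ≤ 2 * ‖Tz x‖ ^ 2)) := by
  -- the inequality on the dense span
  have hspan : ∀ f ∈ Submodule.span ℂ (Set.range m),
      (1/2 : ℝ) * ‖f‖ ≤ ‖Tz f‖ ∧ ‖Tz f‖ ≤ ‖f‖ := by
    intro f hf
    rw [Finsupp.mem_span_range_iff_exists_finsupp] at hf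
    obtain ⟨c, rfl⟩ := hf
    rw [Finsupp.sum]
    have hTf : Tz (∑ n ∈ c.support, c n • m n) = ∑ n ∈ c.support, c n • m (n + 1) := by
      rw [map_sum]
      exact Finset.sum_congr rfl fun n _ => by rw [map_smul, hTz]
    have h1 : ‖∑ n ∈ c.support, c n • m n‖ ^ 2
        = ∑ n ∈ c.support, ‖c n‖ ^ 2 * shimBeta n ^ 2 := by
      simpa using shim_pyth m hmnorm hmorth c.support c id (fun a b h => h)
    have h2 : ‖Tz (∑ n ∈ c.support, c n • m n)‖ ^ 2
        = ∑ n ∈ c.support, ‖c n‖ ^ 2 * shimBeta (n + 1) ^ 2 := by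
      rw [hTf]
      exact shim_pyth m hmnorm hmorth c.support c (· + 1) (fun a b h => by simpa using h)
    have hub : ‖Tz (∑ n ∈ c.support, c n • m n)‖ ^ 2 ≤ ‖∑ n ∈ c.support, c n • m n‖ ^ 2 := by
      rw [h1, h2]
      refine Finset.sum_le_sum fun n _ => ?_
      have h4 : shimBeta (n+1)^2 ≤ shimBeta n ^2 := by
        nlinarith [shimBeta_succ_le n, shimBeta_pos (n+1)]
      nlinarith [sq_nonneg ‖c n‖, h4]
    have hlb : ((1:ℝ)/2) ^ 2 * ‖∑ n ∈ c.support, c n • m n‖ ^ 2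
        ≤ ‖Tz (∑ n ∈ c.support, c n • m n)‖ ^ 2 := by
      rw [h1, h2, Finset.mul_sum]
      refine Finset.sum_le_sum fun n _ => ?_
      have h4 : shimBeta n ^ 2 ≤ 4 * shimBeta (n+1)^2 := by
        nlinarith [shimBeta_le_two_succ n, shimBeta_pos (n+1), shimBeta_pos n]
      nlinarith [sq_nonneg ‖c n‖, h4]
    constructor
    · nlinarith [norm_nonneg (Tz (∑ n ∈ c.support, c n • m n)),
        norm_nonneg (∑ n ∈ c.support, c n • m n)]
    · nlinarith [norm_nonneg (Tz (∑ n ∈ c.support, c n • m n)),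
        norm_nonneg (∑ n ∈ c.support, c n • m n)]
  -- extend to all of V by density
  have hdense : Dense ((Submodule.span ℂ (Set.range m) : Submodule ℂ V) : Set V) := by
    rw [dense_iff_closure_eq]
    have := congrArg (fun K : Submodule ℂ V => (K : Set V)) hmdense
    simpa [Submodule.topologicalClosure_coe] using this
  have hall : ∀ f : V, (1/2 : ℝ) * ‖f‖ ≤ ‖Tz f‖ ∧ ‖Tz f‖ ≤ ‖f‖ := by
    have hclosed : IsClosed {f : V | (1/2 : ℝ) * ‖f‖ ≤ ‖Tz f‖ ∧ ‖Tz f‖ ≤ ‖f‖} := by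
      apply IsClosed.inter
      · exact isClosed_le (continuous_const.mul continuous_norm) Tz.continuous.norm
      · exact isClosed_le Tz.continuous.norm continuous_norm
    intro f
    have : (Set.univ : Set V) ⊆ {f : V | (1/2 : ℝ) * ‖f‖ ≤ ‖Tz f‖ ∧ ‖Tz f‖ ≤ ‖f‖} := by
      rw [← hdense.closure_eq]
      exact hclosed.closure_subset_iff.mpr hspan
    exact this (Set.mem_univ f)
  refine ⟨⟨1/2, by norm_num, hall⟩, ?_, ?_⟩
  · -- range condition
    intro n x
    have hpow : ∀ k j, (Tz ^ k) (m j) = m (j + k) := by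
      intro k
      induction k with
      | zero => intro j; simp
      | succ k ih =>
        intro j
        rw [pow_succ, ContinuousLinearMap.mul_apply, hTz, ih]
        congr 1; omega
    -- kernel trick: a continuous functional vanishing on all m k vanishes
    have hKer : ∀ (L : V →L[ℂ] ℂ), (∀ k, L (m k) = 0) → ∀ v, L v = 0 := by
      intro L hLm v
      have h1 : Submodule.span ℂ (Set.range m) ≤ L.ker := by
        rw [Submodule.span_le]
        rintro _ ⟨k, rfl⟩
        exact hLm k
      have h2 : (Submodule.span ℂ (Set.range m)).topologicalClosure ≤ L.ker :=
        Submodule.topologicalClosure_minimal _ h1 (ContinuousLinearMap.isClosed_ker L)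
      rw [hmdense] at h2
      exact h2 Submodule.mem_top
    -- range of Tz is closed
    have hanti : AntilipschitzWith 2 Tz :=
      Tz.antilipschitz_of_bound fun v => by
        have h := (hall v).1
        have h2 : ((2 : NNReal) : ℝ) = 2 := rfl
        rw [h2]; linarith
    have hclosedR : IsClosed ((LinearMap.range (Tz : V →ₗ[ℂ] V) : Submodule ℂ V) : Set V) := by
      have he : ((LinearMap.range (Tz : V →ₗ[ℂ] V) : Submodule ℂ V) : Set V) = Set.range Tz := by
        ext y; simp [LinearMap.mem_range, Set.mem_range]
      rw [he]
      exact hanti.isClosed_range Tz.uniformContinuous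
    set K : Submodule ℂ V :=
      (Submodule.span ℂ (Set.range fun k => m (k + 1))).topologicalClosure with hK
    haveI : CompleteSpace K :=
      (Submodule.isClosed_topologicalClosure _).completeSpace_coe
    have hKle : K ≤ LinearMap.range (Tz : V →ₗ[ℂ] V) := by
      refine Submodule.topologicalClosure_minimal _ ?_ hclosedR
      rw [Submodule.span_le]
      rintro _ ⟨k, rfl⟩
      exact ⟨m k, hTz k⟩
    -- the key claim: anything orthogonal to m 0 is in the range
    have hmem : ∀ y : V, ⟪m 0, y⟫_ℂ = 0 → y ∈ LinearMap.range (Tz : V →ₗ[ℂ] V) := by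
      intro y hy0
      set z : V := y - (K.orthogonalProjectionOnto y : V) with hz
      have hzK : z ∈ Kᗮ := by
        have := K.sub_starProjection_mem_orthogonal y; rwa [Submodule.starProjection_apply] at this
      have hm0K : K ≤ (innerSL ℂ (m 0)).ker := by
        refine Submodule.topologicalClosure_minimal _ ?_ (ContinuousLinearMap.isClosed_ker _)
        rw [Submodule.span_le]
        rintro _ ⟨k, rfl⟩
        exact hmorth 0 (k + 1) (by omega)
      have hm0P : ⟪m 0, (K.orthogonalProjectionOnto y : V)⟫_ℂ = 0 :=
        hm0K (K.orthogonalProjectionOnto y).2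
      have hz0 : ⟪m 0, z⟫_ℂ = 0 := by
        rw [hz, inner_sub_right, hy0, hm0P, sub_zero]
      have hzorth : z ∈ (Submodule.span ℂ (Set.range m))ᗮ := by
        rw [Submodule.mem_orthogonal]
        intro u hu
        induction hu using Submodule.span_induction with
        | mem u hu =>
          obtain ⟨k, rfl⟩ := hu
          cases k with
          | zero => exact hz0
          | succ k =>
            refine hzK (m (k + 1)) ?_
            exact Submodule.le_topologicalClosure _ (Submodule.subset_span ⟨k, rfl⟩)
        | zero => simp
        | add u v hu hv ihu ihv => rw [inner_add_left, ihu, ihv, add_zero]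
        | smul c u hu ihu => rw [inner_smul_left, ihu, mul_zero]
      have hbot : (Submodule.span ℂ (Set.range m))ᗮ = ⊥ :=
        Submodule.topologicalClosure_eq_top_iff.mp hmdense
      have hz0' : z = 0 := by
        rw [hbot] at hzorth
        simpa using hzorth
      have : y = (K.orthogonalProjectionOnto y : V) := by
        have := sub_eq_zero.mp hz0'
        exact this
      rw [this]
      exact hKle (K.orthogonalProjectionOnto y).2
    apply hmem
    -- compute the inner product with m 0
    have hadj : (ContinuousLinearMap.adjoint Tz) ^ n = ContinuousLinearMap.adjoint (Tz ^ n) := by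
      rw [← ContinuousLinearMap.star_eq_adjoint, ← ContinuousLinearMap.star_eq_adjoint,
        ← star_pow]
    rw [hadj, ContinuousLinearMap.adjoint_inner_right, hpow n 0]
    have hzero : ∀ v : V, ⟪m (0 + n), (Tz ^ (n + 1)) v⟫_ℂ = 0 := by
      apply hKer ((innerSL ℂ (m (0 + n))).comp (Tz ^ (n + 1)))
      intro k
      simp only [ContinuousLinearMap.comp_apply, innerSL_apply_apply]
      rw [hpow (n + 1) k]
      exact hmorth _ _ (by omega)
    exact hzero x
  · -- Shimorin failure at m 1
    refine ⟨m 1, ?_⟩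
    have e1 : shimBeta 1 = 1 := by
      norm_num [shimBeta]
    have e2 : shimBeta 2 = 1/2 := by
      have := shimBeta_succ 1
      rw [e1] at this
      simpa using this
    have e3 : shimBeta 3 = 1/2 := by
      have := shimBeta_succ 2
      rw [e2] at this
      simpa using this
    have hT1 : Tz (m 1) = m 2 := hTz 1
    have hT2 : (Tz ^ 2) (m 1) = m 3 := by
      rw [pow_two, ContinuousLinearMap.mul_apply, hTz, hTz]
    rw [hT2, hmnorm, hmnorm, hT1, hmnorm, e1, e2, e3]
    norm_num
end
end

section
/- (Singh–Singh / de Branges, scalar case) Let M be a Hilbert space contained in H² as a vector subspace such that T_z(M) ⊆ M and T_z acts isometrically on M (‖zf‖_M = ‖f‖_M for all f ∈ M). Then there exists b ∈ H^∞ such that M = bH² and ‖bf‖_M = ‖f‖_{H²} for all f ∈ H². -/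
open scoped InnerProductSpace

noncomputable section

def H2Norm (f : PowerSeries ℂ) : ℝ := Real.sqrt (∑' n, ‖coefn f n‖ ^ 2)

def MemHinf (f : PowerSeries ℂ) : Prop :=
  MemH2 f ∧ ∃ C : ℝ, ∀ z : ℂ, ‖z‖ < 1 → ‖∑' n, coefn f n * z ^ n‖ ≤ C

section Aux

variable {E : Type*} [NormedAddCommGroup E] [InnerProductSpace ℂ E] [CompleteSpace E]

-- basic: mk ∘ coefn
lemma mk_coefn (f : PowerSeries ℂ) : PowerSeries.mk (coefn f) = f := by
  ext n; simp [coefn]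

lemma memℓp_two_iff (a : ℕ → ℂ) : Memℓp a 2 ↔ Summable (fun n => ‖a n‖ ^ 2) := by
  rw [memℓp_gen_iff (by norm_num : (0:ℝ) < (2 : ENNReal).toReal)]
  constructor <;> intro h <;> [skip; skip] <;>
  · convert h using 2 with n
    rw [ENNReal.toReal_ofNat]
    rw [show ((2:ℝ)) = ((2:ℕ):ℝ) by norm_num, Real.rpow_natCast]

variable (J : E →ₗ[ℂ] PowerSeries ℂ)
    (T : E →L[ℂ] E)

lemma Jpow (hT : ∀ x : E, J (T x) = PowerSeries.X * J x) (n : ℕ) (x : E) :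
    J ((T ^ n) x) = PowerSeries.X ^ n * J x := by
  induction n generalizing x with
  | zero => simp
  | succ n ih =>
    have : (T ^ (n+1)) x = (T ^ n) (T x) := by
      rw [pow_succ]; rfl
    rw [this, ih, hT, pow_succ]
    ring

lemma coef_zero_of_mem_range (hT : ∀ x : E, J (T x) = PowerSeries.X * J x)
    (k : ℕ) (x : E) (hx : ∃ y, (T ^ (k+1)) y = x) : coefn (J x) k = 0 := by
  obtain ⟨y, rfl⟩ := hx
  rw [coefn, Jpow J T hT, PowerSeries.coeff_X_pow_mul']
  simp

end Aux

set_option linter.unusedSectionVars false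
set_option maxHeartbeats 1000000

section Aux2

variable {E : Type*} [NormedAddCommGroup E] [InnerProductSpace ℂ E] [CompleteSpace E]
variable (J : E →ₗ[ℂ] PowerSeries ℂ) (T : E →L[ℂ] E)
variable (hiso : ∀ x : E, ‖T x‖ = ‖x‖)
include hiso

lemma norm_pow_apply (n : ℕ) (x : E) : ‖(T ^ n) x‖ = ‖x‖ := by
  induction n generalizing x with
  | zero => simp
  | succ n ih =>
    have : (T ^ (n+1)) x = (T ^ n) (T x) := by rw [pow_succ]; rfl
    rw [this, ih, hiso]

lemma inner_pow_map (n : ℕ) (x y : E) : ⟪(T ^ n) x, (T ^ n) y⟫_ℂ = ⟪x, y⟫_ℂ := by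
  let T' : E →ₗᵢ[ℂ] E := ⟨T.toLinearMap, hiso⟩
  have hT' : ∀ z : E, T' z = T z := fun z => rfl
  induction n generalizing x y with
  | zero => simp
  | succ n ih =>
    have h1 : (T ^ (n+1)) x = (T ^ n) (T x) := by rw [pow_succ]; rfl
    have h2 : (T ^ (n+1)) y = (T ^ n) (T y) := by rw [pow_succ]; rfl
    rw [h1, h2, ih, ← hT' x, ← hT' y, T'.inner_map_map]

omit hiso in
lemma inner_T_right (u y : E) (hu : u ∈ (LinearMap.range (T : E →ₗ[ℂ] E))ᗮ) :
    ⟪u, T y⟫_ℂ = 0 := by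
  have h : ⟪T y, u⟫_ℂ = 0 :=
    (Submodule.mem_orthogonal _ u).1 hu (T y) ⟨y, rfl⟩
  rw [← inner_conj_symm, h, map_zero]

lemma inner_pow_pow_zero (u v : E)
    (hu : u ∈ (LinearMap.range (T : E →ₗ[ℂ] E))ᗮ)
    (hv : v ∈ (LinearMap.range (T : E →ₗ[ℂ] E))ᗮ)
    (huv : ⟪u, v⟫_ℂ = 0) :
    ∀ m n : ℕ, ⟪(T ^ m) u, (T ^ n) v⟫_ℂ = 0 := by
  have key : ∀ (a b : E), a ∈ (LinearMap.range (T : E →ₗ[ℂ] E))ᗮ →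
      ∀ d : ℕ, ⟪a, (T ^ (d+1)) b⟫_ℂ = 0 := by
    intro a b ha d
    have : (T ^ (d+1)) b = T ((T ^ d) b) := by rw [pow_succ']; rfl
    rw [this]
    exact inner_T_right T a _ ha
  intro m n
  rcases lt_trichotomy m n with h | h | h
  · obtain ⟨d, rfl⟩ : ∃ d, n = m + (d + 1) :=
      ⟨n - m - 1, by omega⟩
    rw [pow_add, ContinuousLinearMap.mul_apply, inner_pow_map T hiso]
    exact key u _ hu d
  · subst h
    rw [inner_pow_map T hiso]; exact huv
  · obtain ⟨d, rfl⟩ : ∃ d, m = n + (d + 1) := ⟨m - n - 1, by omega⟩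
    rw [pow_add, ContinuousLinearMap.mul_apply, inner_pow_map T hiso]
    rw [← inner_conj_symm, key v _ hv d, map_zero]

omit J in
lemma orthonormal_pow (u : E) (hu : u ∈ (LinearMap.range (T : E →ₗ[ℂ] E))ᗮ)
    (hnorm : ‖u‖ = 1) : Orthonormal ℂ (fun n : ℕ => (T ^ n) u) := by
  constructor
  · intro n; rw [norm_pow_apply T hiso, hnorm]
  · intro m n hmn
    dsimp only
    rcases lt_trichotomy m n with h | h | h
    · obtain ⟨d, rfl⟩ : ∃ d, n = m + (d + 1) := ⟨n - m - 1, by omega⟩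
      rw [pow_add, ContinuousLinearMap.mul_apply, inner_pow_map T hiso]
      have : (T ^ (d+1)) u = T ((T ^ d) u) := by rw [pow_succ']; rfl
      rw [this]
      exact inner_T_right T u _ hu
    · exact absurd h hmn
    · obtain ⟨d, rfl⟩ : ∃ d, m = n + (d + 1) := ⟨m - n - 1, by omega⟩
      rw [pow_add, ContinuousLinearMap.mul_apply, inner_pow_map T hiso]
      have : (T ^ (d+1)) u = T ((T ^ d) u) := by rw [pow_succ']; rfl
      rw [← inner_conj_symm, this, inner_T_right T u _ hu, map_zero]

end Aux2

section Key

variable {E : Type*} [NormedAddCommGroup E] [InnerProductSpace ℂ E] [CompleteSpace E]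
variable (J : E →ₗ[ℂ] PowerSeries ℂ) (T : E →L[ℂ] E)
variable (hiso : ∀ x : E, ‖T x‖ = ‖x‖) (hT : ∀ x : E, J (T x) = PowerSeries.X * J x)
include hiso hT

lemma key_lemma (u : E) (hu : u ∈ (LinearMap.range (T : E →ₗ[ℂ] E))ᗮ)
    (hnorm : ‖u‖ = 1) (a : ℕ → ℂ) (ha : Summable fun n => ‖a n‖ ^ 2) :
    ∃ x : E, HasSum (fun n => a n • (T ^ n) u) x ∧
      ‖x‖ = Real.sqrt (∑' n, ‖a n‖ ^ 2) ∧ J x = PowerSeries.mk a * J u := by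
  have hv : Orthonormal ℂ (fun n : ℕ => (T ^ n) u) := orthonormal_pow T hiso u hu hnorm
  have hOF := hv.orthogonalFamily
  have mk_elt : ∀ (c : ℕ → ℂ), Summable (fun n => ‖c n‖ ^ 2) →
      ∃ x : E, HasSum (fun n => c n • (T ^ n) u) x ∧ ‖x‖ = Real.sqrt (∑' n, ‖c n‖ ^ 2) := by
    intro c hc
    set fc : lp (fun _ : ℕ => ℂ) 2 := ⟨c, (memℓp_two_iff c).2 hc⟩ with hfc
    refine ⟨hOF.linearIsometry fc, ?_, ?_⟩
    · simpa [LinearIsometry.toSpanSingleton_apply] using hOF.hasSum_linearIsometry fc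
    · rw [hOF.linearIsometry.norm_map,
        lp.norm_eq_tsum_rpow (by norm_num : (0:ℝ) < (2 : ENNReal).toReal)]
      have h1 : ∀ n, ‖fc n‖ ^ ((2 : ENNReal).toReal) = ‖c n‖ ^ 2 := by
        intro n
        rw [ENNReal.toReal_ofNat, show ((2:ℝ)) = ((2:ℕ):ℝ) by norm_num, Real.rpow_natCast]
      rw [tsum_congr h1, Real.sqrt_eq_rpow]
      norm_num
  obtain ⟨x, hsum, hxnorm⟩ := mk_elt a ha
  refine ⟨x, hsum, hxnorm, ?_⟩
  ext k
  have ha' : Summable (fun m => ‖a (m + (k+1))‖ ^ 2) := (summable_nat_add_iff (k+1)).2 ha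
  obtain ⟨z, hz, -⟩ := mk_elt (fun m => a (m + (k+1))) ha'
  have htail : HasSum (fun m => a (m + (k+1)) • (T ^ (m + (k+1))) u)
      (x - ∑ i ∈ Finset.range (k+1), a i • (T ^ i) u) :=
    (hasSum_nat_add_iff' (k+1)).2 hsum
  have hz' : HasSum (fun m => a (m + (k+1)) • (T ^ (m + (k+1))) u) ((T ^ (k+1)) z) := by
    have h2 := (T ^ (k+1)).hasSum hz
    convert h2 using 2 with m
    rw [ContinuousLinearMap.map_smul]
    congr 1
    rw [show m + (k+1) = (k+1) + m by omega, pow_add, ContinuousLinearMap.mul_apply]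
  have hxdecomp : x - ∑ i ∈ Finset.range (k+1), a i • (T ^ i) u = (T ^ (k+1)) z :=
    htail.unique hz'
  have hJx : J x = J (∑ i ∈ Finset.range (k+1), a i • (T ^ i) u) + J ((T ^ (k+1)) z) := by
    rw [← map_add]
    congr 1
    rw [← hxdecomp]
    abel
  have h0 : (PowerSeries.coeff k) (J ((T ^ (k+1)) z)) = 0 := by
    have h3 := coef_zero_of_mem_range J T hT k ((T ^ (k+1)) z) ⟨z, rfl⟩
    rwa [coefn] at h3
  rw [hJx, map_add, h0, add_zero, map_sum, map_sum, PowerSeries.coeff_mul,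
    Finset.Nat.sum_antidiagonal_eq_sum_range_succ_mk]
  apply Finset.sum_congr rfl
  intro i hi
  rw [Finset.mem_range] at hi
  rw [map_smul, Jpow J T hT, map_smul, smul_eq_mul, PowerSeries.coeff_X_pow_mul',
    if_pos (by omega : i ≤ k), PowerSeries.coeff_mk]

end Key

section LpHelp

lemma lp_norm_eq (f : lp (fun _ : ℕ => ℂ) 2) : ‖f‖ = Real.sqrt (∑' n, ‖f n‖ ^ 2) := by
  rw [lp.norm_eq_tsum_rpow (by norm_num : (0:ℝ) < (2 : ENNReal).toReal)]
  have h1 : ∀ n, ‖f n‖ ^ ((2 : ENNReal).toReal) = ‖f n‖ ^ 2 := by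
    intro n
    rw [ENNReal.toReal_ofNat, show ((2:ℝ)) = ((2:ℕ):ℝ) by norm_num, Real.rpow_natCast]
  rw [tsum_congr h1, Real.sqrt_eq_rpow]
  norm_num

lemma lp_eval_continuous (i : ℕ) : Continuous (fun f : lp (fun _ : ℕ => ℂ) 2 => f i) := by
  have : LipschitzWith 1 (fun f : lp (fun _ : ℕ => ℂ) 2 => f i) := by
    apply LipschitzWith.of_dist_le_mul
    intro f g
    rw [NNReal.coe_one, one_mul, dist_eq_norm, dist_eq_norm]
    have : f i - g i = (f - g) i := by rw [lp.coeFn_sub]; rfl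
    rw [this]
    exact lp.norm_apply_le_norm (by norm_num) (f - g) i

  exact this.continuous

end LpHelp

/-- Singh–Singh / de Branges, scalar case: If `M` is a nontrivial Hilbert
space contained in `H²` as a vector subspace with `T_z(M) ⊆ M` and `T_z` acting
isometrically on `M`, then there is `b ∈ H^∞` with `M = bH²` and `‖bf‖_M = ‖f‖_{H²}`
for all `f ∈ H²`. -/
theorem stmt16
    {E : Type*} [NormedAddCommGroup E] [InnerProductSpace ℂ E] [CompleteSpace E]
    (J : E →ₗ[ℂ] PowerSeries ℂ) (hJinj : Function.Injective J)
    (hH2 : ∀ x : E, MemH2 (J x))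
    (hnt : ∃ x : E, x ≠ 0)
    (T : E →L[ℂ] E) (hT : ∀ x : E, J (T x) = PowerSeries.X * J x)
    (hiso : ∀ x : E, ‖T x‖ = ‖x‖) :
    ∃ b : PowerSeries ℂ, MemHinf b ∧
      {p : PowerSeries ℂ | ∃ x : E, J x = p} =
        {p : PowerSeries ℂ | ∃ g : PowerSeries ℂ, MemH2 g ∧ p = b * g} ∧
      (∀ (g : PowerSeries ℂ) (x : E), MemH2 g → J x = b * g → ‖x‖ = H2Norm g) := by
  classical
  have hJ0 : ∀ x : E, J x = 0 → x = 0 := by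
    intro x hx
    apply hJinj
    rw [hx, map_zero]
  set R : Submodule ℂ E := LinearMap.range (T : E →ₗ[ℂ] E) with hRdef
  have hRclosed : IsClosed (R : Set E) := by
    have hisoT : Isometry T := AddMonoidHomClass.isometry_of_norm T hiso
    have h := hisoT.isClosedEmbedding.isClosed_range
    convert h using 1
    exact LinearMap.coe_range (T : E →ₗ[ℂ] E)
  haveI : CompleteSpace R := hRclosed.completeSpace_coe
  -- elements in all ranges of powers are zero
  have hzero : ∀ x : E, (∀ n : ℕ, ∃ y, (T ^ n) y = x) → x = 0 := by
    intro x hx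
    apply hJ0
    ext k
    have := coef_zero_of_mem_range J T hT k x (hx (k+1))
    rw [coefn] at this
    rw [this, map_zero]
  -- the wandering subspace is nontrivial
  have hWne : Rᗮ ≠ ⊥ := by
    intro hbot
    have hRtop : R = ⊤ := Submodule.orthogonal_eq_bot_iff.1 hbot
    obtain ⟨x0, hx0⟩ := hnt
    apply hx0
    apply hzero
    intro n
    induction n with
    | zero => exact ⟨x0, by simp⟩
    | succ n ih =>
      obtain ⟨y, hy⟩ := ih
      have : y ∈ R := hRtop ▸ Submodule.mem_top
      obtain ⟨z, hz⟩ := this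
      have hz' : T z = y := hz
      refine ⟨z, ?_⟩
      rw [pow_succ, ContinuousLinearMap.mul_apply, hz', hy]
  obtain ⟨e0, he0W, he0ne⟩ := Submodule.ne_bot_iff _ |>.1 hWne
  set e1 : E := ‖e0‖⁻¹ • e0 with he1def
  have he1 : e1 ∈ Rᗮ := Submodule.smul_mem _ _ he0W
  have hn1 : ‖e1‖ = 1 := by
    rw [he1def, norm_smul, norm_inv, norm_norm, inv_mul_cancel₀ (norm_ne_zero_iff.2 he0ne)]
  have he1ne : e1 ≠ 0 := by
    intro h
    rw [h, norm_zero] at hn1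
    norm_num at hn1
  have hbne : J e1 ≠ 0 := fun h => he1ne (hJ0 _ h)
  -- Step D : wandering subspace is one-dimensional
  have hW1 : ∀ w, w ∈ Rᗮ → ⟪e1, w⟫_ℂ = 0 → w = 0 := by
    intro w hw hew
    by_contra hwne
    set e2 : E := ((‖w‖⁻¹ : ℝ) : ℂ) • w with he2def
    have he2 : e2 ∈ Rᗮ := Submodule.smul_mem _ _ hw
    have hn2 : ‖e2‖ = 1 := by
      rw [he2def, norm_smul, Complex.norm_real, norm_inv, norm_norm,
        inv_mul_cancel₀ (norm_ne_zero_iff.2 hwne)]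
    have he2ne : e2 ≠ 0 := by
      intro h; rw [h, norm_zero] at hn2; norm_num at hn2
    have he12 : ⟪e1, e2⟫_ℂ = 0 := by
      rw [he2def, inner_smul_right, hew, mul_zero]
    obtain ⟨x1, h1, -, hJ1⟩ :=
      key_lemma J T hiso hT e1 he1 hn1 (coefn (J e2)) (hH2 e2)
    obtain ⟨x2, h2, -, hJ2⟩ :=
      key_lemma J T hiso hT e2 he2 hn2 (coefn (J e1)) (hH2 e1)
    have hJx12 : J (x1 - x2) = 0 := by
      rw [map_sub, hJ1, hJ2, mk_coefn, mk_coefn, mul_comm, sub_self]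
    have hx12 : x1 = x2 := by
      have := hJ0 _ hJx12
      rwa [sub_eq_zero] at this
    have hortho : ∀ n : ℕ, ⟪(T ^ n) e1, x2⟫_ℂ = 0 := by
      intro n
      have hh := h2.mapL (innerSL ℂ ((T ^ n) e1))
      simp only [innerSL_apply_apply] at hh
      have hfun : ∀ m, ⟪(T ^ n) e1, (coefn (J e1) m) • (T ^ m) e2⟫_ℂ = 0 := by
        intro m
        rw [inner_smul_right, inner_pow_pow_zero T hiso e1 e2 he1 he2 he12 n m, mul_zero]
      simp only [hfun] at hh
      exact (hh.unique hasSum_zero).symm ▸ rfl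
    have hx2x1 : ⟪x2, x1⟫_ℂ = 0 := by
      have hh := h1.mapL (innerSL ℂ x2)
      simp only [innerSL_apply_apply] at hh
      have hfun : ∀ m, ⟪x2, (coefn (J e2) m) • (T ^ m) e1⟫_ℂ = 0 := by
        intro m
        rw [inner_smul_right, ← inner_conj_symm, hortho m, map_zero, mul_zero]
      simp only [hfun] at hh
      exact (hh.unique hasSum_zero).symm ▸ rfl
    rw [hx12, inner_self_eq_zero] at hx2x1
    have : J e1 * J e2 = 0 := by
      rw [← mk_coefn (J e1), ← hJ2, hx2x1, map_zero]
    rcases mul_eq_zero.1 this with h | h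
    · exact hbne h
    · exact he2ne (hJ0 _ h)
  -- Step E : totality of the family (T^n e1)
  have hv : Orthonormal ℂ (fun n : ℕ => (T ^ n) e1) := orthonormal_pow T hiso e1 he1 hn1
  have hsp : (Submodule.span ℂ (Set.range (fun n : ℕ => (T ^ n) e1)))ᗮ = ⊥ := by
    rw [Submodule.eq_bot_iff]
    intro y hy
    have hy' : ∀ n : ℕ, ⟪(T ^ n) e1, y⟫_ℂ = 0 := by
      intro n
      exact (Submodule.mem_orthogonal _ y).1 hy _ (Submodule.subset_span ⟨n, rfl⟩)
    have key2 : ∀ n : ℕ, ∃ yn, (T ^ n) yn = y ∧ ∀ m : ℕ, ⟪(T ^ m) e1, yn⟫_ℂ = 0 := by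
      intro n
      induction n with
      | zero => exact ⟨y, by simp, hy'⟩
      | succ n ih =>
        obtain ⟨yn, hyn, horth⟩ := ih
        have hmem : yn ∈ Rᗮᗮ := by
          rw [Submodule.mem_orthogonal]
          intro w hw
          have hw' : w - ⟪e1, w⟫_ℂ • e1 ∈ Rᗮ :=
            Submodule.sub_mem _ hw (Submodule.smul_mem _ _ he1)
          have hinner0 : ⟪e1, w - ⟪e1, w⟫_ℂ • e1⟫_ℂ = 0 := by
            rw [inner_sub_right, inner_smul_right, inner_self_eq_norm_sq_to_K, hn1]
            norm_num
          have hweq := hW1 _ hw' hinner0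
          have hweq2 : w = ⟪e1, w⟫_ℂ • e1 := by
            have := sub_eq_zero.1 hweq
            linear_combination (norm := module) this
          rw [hweq2, inner_smul_left]
          have : ⟪e1, yn⟫_ℂ = 0 := by
            have := horth 0
            simpa using this
          rw [this, mul_zero]
        rw [Submodule.orthogonal_orthogonal] at hmem
        obtain ⟨z, hz⟩ := hmem
        have hz' : T z = yn := hz
        refine ⟨z, ?_, ?_⟩
        · rw [pow_succ, ContinuousLinearMap.mul_apply, hz', hyn]
        · intro m
          have h1 : (T ^ (m+1)) e1 = T ((T ^ m) e1) := by
            rw [pow_succ']; rfl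
          have h2 : ⟪(T ^ (m+1)) e1, yn⟫_ℂ = 0 := horth (m+1)
          rw [h1, ← hz'] at h2
          let T' : E →ₗᵢ[ℂ] E := ⟨T.toLinearMap, hiso⟩
          have h3 : ⟪T ((T ^ m) e1), T z⟫_ℂ = ⟪(T ^ m) e1, z⟫_ℂ := T'.inner_map_map _ _
          rw [← h3]
          exact h2
    apply hzero
    intro n
    obtain ⟨yn, hyn, -⟩ := key2 n
    exact ⟨yn, hyn⟩
  set B : HilbertBasis ℕ ℂ E := HilbertBasis.mkOfOrthogonalEqBot hv hsp with hBdef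
  have hB : ∀ n : ℕ, B n = (T ^ n) e1 := by
    intro n
    rw [hBdef]
    exact congrFun (HilbertBasis.coe_mkOfOrthogonalEqBot hv hsp) n
  have repr_sum : ∀ x : E, Summable (fun n => ‖B.repr x n‖ ^ 2) := by
    intro x
    exact (memℓp_two_iff _).1 (lp.memℓp (B.repr x))
  have decomp : ∀ x : E, J x = PowerSeries.mk (fun n => B.repr x n) * J e1 ∧
      ‖x‖ = Real.sqrt (∑' n, ‖B.repr x n‖ ^ 2) := by
    intro x
    obtain ⟨x', hs', hn', hJ'⟩ :=
      key_lemma J T hiso hT e1 he1 hn1 (fun n => B.repr x n) (repr_sum x)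
    have hxx : x' = x := by
      apply hs'.unique
      have h := B.hasSum_repr x
      convert h using 2 with n
      rw [hB n]
    rw [hxx] at hJ' hn'
    exact ⟨hJ', hn'⟩
  refine ⟨J e1, ⟨hH2 e1, ?_⟩, ?_, ?_⟩
  · -- H-infinity bound via closed graph theorem
    have memcoef : ∀ x : E, Memℓp (fun n => coefn (J x) n) 2 :=
      fun x => (memℓp_two_iff _).2 (hH2 x)
    set Ψ : E →ₗ[ℂ] lp (fun _ : ℕ => ℂ) 2 :=
      { toFun := fun x => ⟨fun n => coefn (J x) n, memcoef x⟩
        map_add' := by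
          intro x y
          apply lp.ext
          funext n
          simp only [lp.coeFn_add, Pi.add_apply]
          show coefn (J (x + y)) n = coefn (J x) n + coefn (J y) n
          simp [coefn, map_add]
        map_smul' := by
          intro c x
          apply lp.ext
          funext n
          simp only [lp.coeFn_smul, Pi.smul_apply, RingHom.id_apply]
          show coefn (J (c • x)) n = c • coefn (J x) n
          simp only [coefn, map_smul, smul_eq_mul] } with hΨdef
    have hΨapp : ∀ (x : E) (n : ℕ), (Ψ x) n = coefn (J x) n := fun x n => rfl
    have hck : ∀ (w : E) (k : ℕ), coefn (J w) k =
        ∑ i ∈ Finset.range (k+1), B.repr w i * coefn (J e1) (k - i) := by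
      intro w k
      rw [coefn, (decomp w).1, PowerSeries.coeff_mul,
        Finset.Nat.sum_antidiagonal_eq_sum_range_succ_mk]
      exact Finset.sum_congr rfl fun i _ => by rw [PowerSeries.coeff_mk]; rfl
    have hcont : Continuous Ψ := by
      apply LinearMap.continuous_of_seq_closed_graph
      intro u x y hux huy
      apply lp.ext
      funext k
      show y k = coefn (J x) k
      have ht1 : Filter.Tendsto (fun j => coefn (J (u j)) k) Filter.atTop
          (nhds (coefn (J x) k)) := by
        have heq : (fun j => coefn (J (u j)) k)
            = fun j => ∑ i ∈ Finset.range (k+1), B.repr (u j) i * coefn (J e1) (k - i) :=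
          funext fun j => hck (u j) k
        rw [heq, hck x k]
        apply tendsto_finset_sum
        intro i _
        have hc1 : Continuous (fun w : E => B.repr w i) :=
          (lp_eval_continuous i).comp B.repr.continuous
        exact ((hc1.tendsto x).comp hux).mul_const _
      have ht2 : Filter.Tendsto (fun j => coefn (J (u j)) k) Filter.atTop (nhds (y k)) :=
        ((lp_eval_continuous k).tendsto y).comp huy
      exact tendsto_nhds_unique ht2 ht1
    set Ψc : E →L[ℂ] lp (fun _ : ℕ => ℂ) 2 := ⟨Ψ, hcont⟩ with hΨcdef
    refine ⟨‖Ψc‖, ?_⟩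
    intro z hz
    have hz2 : ‖z‖^2 < 1 := by nlinarith [norm_nonneg z]
    have hkmem : Memℓp (fun n : ℕ => (starRingEnd ℂ z)^n) 2 := by
      apply (memℓp_two_iff _).2
      have h1 : ∀ n : ℕ, ‖(starRingEnd ℂ z)^n‖^2 = (‖z‖^2)^n := by
        intro n
        rw [norm_pow, RCLike.norm_conj]
        ring
      rw [funext h1]
      exact summable_geometric_of_lt_one (by positivity) hz2
    set kz : lp (fun _ : ℕ => ℂ) 2 := ⟨fun n : ℕ => (starRingEnd ℂ z)^n, hkmem⟩ with hkzdef
    have hkz : ∀ n : ℕ, kz n = (starRingEnd ℂ z)^n := fun n => rfl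
    set xz : E := B.repr.symm kz with hxzdef
    have hrepr : ∀ n, B.repr xz n = (starRingEnd ℂ z)^n := by
      intro n
      rw [hxzdef, LinearIsometryEquiv.apply_symm_apply]
    have hnxz : ‖xz‖ = ‖kz‖ := B.repr.symm.norm_map kz
    have hIP : ∑' k, coefn (J xz) k * z^k = ⟪kz, Ψc xz⟫_ℂ := by
      rw [lp.inner_eq_tsum]
      apply tsum_congr
      intro n
      rw [RCLike.inner_apply]
      have h1 : (starRingEnd ℂ) (kz n) = z ^ n := by
        rw [hkz n, map_pow, Complex.conj_conj]
      rw [h1]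
      rfl
    have hknorm2 : ‖kz‖^2 = (1 - ‖z‖^2)⁻¹ := by
      rw [lp_norm_eq kz, Real.sq_sqrt (tsum_nonneg (fun n => by positivity))]
      have h1 : ∀ n : ℕ, ‖kz n‖^2 = (‖z‖^2)^n := by
        intro n
        rw [hkz n, norm_pow, RCLike.norm_conj]
        ring
      rw [tsum_congr h1]
      exact tsum_geometric_of_lt_one (by positivity) hz2
    have hsumf : Summable (fun n : ℕ => ‖((starRingEnd ℂ z) * z)^n‖) := by
      have h1 : ∀ n : ℕ, ‖((starRingEnd ℂ z) * z)^n‖ = (‖z‖^2)^n := by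
        intro n
        rw [norm_pow, norm_mul, RCLike.norm_conj]
        ring
      rw [funext h1]
      exact summable_geometric_of_lt_one (by positivity) hz2
    have hbd : ∀ n, ‖coefn (J e1) n‖ ≤ ‖Ψc e1‖ := by
      intro n
      have h1 := lp.norm_apply_le_norm (by norm_num : (2 : ENNReal) ≠ 0) (Ψc e1) n
      exact h1
    have hsumg : Summable (fun n : ℕ => ‖coefn (J e1) n * z^n‖) := by
      apply Summable.of_nonneg_of_le (fun n => norm_nonneg _) (fun n => ?_)
        (((summable_geometric_of_lt_one (norm_nonneg z) hz)).mul_left ‖Ψc e1‖)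
      rw [norm_mul, norm_pow]
      exact mul_le_mul_of_nonneg_right (hbd n) (by positivity)
    have hprod : (∑' n : ℕ, ((starRingEnd ℂ z) * z)^n) * (∑' n : ℕ, coefn (J e1) n * z^n)
        = ∑' k, coefn (J xz) k * z^k := by
      rw [tsum_mul_tsum_eq_tsum_sum_range_of_summable_norm hsumf hsumg]
      apply tsum_congr
      intro k
      have hckz : coefn (J xz) k =
          ∑ i ∈ Finset.range (k+1), (starRingEnd ℂ z)^i * coefn (J e1) (k-i) := by
        rw [hck xz k]
        exact Finset.sum_congr rfl fun i _ => by rw [hrepr i]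
      rw [hckz, Finset.sum_mul]
      apply Finset.sum_congr rfl
      intro i hi
      rw [Finset.mem_range] at hi
      have hzk : z^k = z^i * z^(k-i) := by
        rw [← pow_add]
        congr 1
        omega
      rw [hzk, mul_pow]
      ring
    have hgeo : (∑' n : ℕ, ((starRingEnd ℂ z) * z)^n) = (1 - (starRingEnd ℂ z) * z)⁻¹ := by
      apply tsum_geometric_of_norm_lt_one
      rw [norm_mul, RCLike.norm_conj]
      nlinarith [norm_nonneg z]
    have hone : (1 : ℂ) - (starRingEnd ℂ z) * z = ((1 - ‖z‖^2 : ℝ) : ℂ) := by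
      rw [RCLike.conj_mul, Complex.ofReal_sub, Complex.ofReal_one, Complex.ofReal_pow]
      rfl
    have honenorm : ‖(1 : ℂ) - (starRingEnd ℂ z) * z‖ = 1 - ‖z‖^2 := by
      rw [hone, Complex.norm_real, Real.norm_eq_abs, abs_of_nonneg (by nlinarith)]
    have hpos : (0:ℝ) < 1 - ‖z‖^2 := by nlinarith
    -- final computation
    have hne : (1:ℂ) - (starRingEnd ℂ z) * z ≠ 0 := by
      rw [hone]
      exact Complex.ofReal_ne_zero.mpr hpos.ne'
    have hmain : ‖∑' n : ℕ, coefn (J e1) n * z^n‖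
        = (1 - ‖z‖^2) * ‖∑' k, coefn (J xz) k * z^k‖ := by
      have h2 : ∑' n : ℕ, coefn (J e1) n * z^n
          = ((1:ℂ) - (starRingEnd ℂ z) * z) * ∑' k, coefn (J xz) k * z^k := by
        rw [← hprod, hgeo, ← mul_assoc, mul_inv_cancel₀ hne, one_mul]
      rw [h2, norm_mul, honenorm]
    rw [hmain, hIP]
    have hb1 : ‖⟪kz, Ψc xz⟫_ℂ‖ ≤ ‖kz‖ * ‖Ψc xz‖ := norm_inner_le_norm _ _
    have hb2 : ‖Ψc xz‖ ≤ ‖Ψc‖ * ‖xz‖ := Ψc.le_opNorm xz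
    have hb3 : ‖⟪kz, Ψc xz⟫_ℂ‖ ≤ ‖Ψc‖ * ‖kz‖^2 := by
      calc ‖⟪kz, Ψc xz⟫_ℂ‖ ≤ ‖kz‖ * ‖Ψc xz‖ := hb1
        _ ≤ ‖kz‖ * (‖Ψc‖ * ‖xz‖) := by
            exact mul_le_mul_of_nonneg_left hb2 (norm_nonneg _)
        _ = ‖Ψc‖ * ‖kz‖^2 := by rw [hnxz]; ring
    calc (1 - ‖z‖^2) * ‖⟪kz, Ψc xz⟫_ℂ‖ ≤ (1 - ‖z‖^2) * (‖Ψc‖ * ‖kz‖^2) := by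
          exact mul_le_mul_of_nonneg_left hb3 (le_of_lt hpos)
      _ = ‖Ψc‖ := by
          rw [hknorm2, mul_comm ‖Ψc‖ ((1 - ‖z‖^2)⁻¹), ← mul_assoc,
            mul_inv_cancel₀ hpos.ne', one_mul]
  · ext p
    constructor
    · rintro ⟨x, rfl⟩
      refine ⟨PowerSeries.mk (fun n => B.repr x n), ?_, ?_⟩
      · rw [MemH2]
        have : ∀ n, coefn (PowerSeries.mk (fun n => B.repr x n)) n = B.repr x n := by
          intro n; rw [coefn, PowerSeries.coeff_mk]
        rw [funext fun n => congrArg (fun t => ‖t‖^2) (this n)]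
        exact repr_sum x
      · rw [(decomp x).1, mul_comm]
    · rintro ⟨g, hg, rfl⟩
      obtain ⟨x, -, -, hJx⟩ :=
        key_lemma J T hiso hT e1 he1 hn1 (coefn g) hg
      exact ⟨x, by rw [hJx, mk_coefn, mul_comm]⟩
  · intro g x hg hJx
    have h1 := (decomp x).1
    have h2 : J e1 * PowerSeries.mk (fun n => B.repr x n) = J e1 * g := by
      rw [mul_comm (J e1) (PowerSeries.mk fun n => B.repr x n), ← h1, hJx]
    have h3 : PowerSeries.mk (fun n => B.repr x n) = g := mul_left_cancel₀ hbne h2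
    have h4 : ∀ n, B.repr x n = coefn g n := by
      intro n
      rw [← h3, coefn, PowerSeries.coeff_mk]
    rw [(decomp x).2, H2Norm]
    congr 1
    exact tsum_congr fun n => by rw [h4 n]
end
end

section
/- Let M ⊆ H² satisfy the hypotheses of the main theorem and suppose every f ∈ M vanishes at 0. If n is the largest integer such that f^{(k)}(0) = 0 for all 0 ≤ k ≤ n and all f ∈ M, then K = {g ∈ H² : z^{n+1}g ∈ M}, equipped with the norm ‖g‖_K = ‖z^{n+1}g‖_M, is a Hilbert space contained in H², invariant under T_z, containing a function nonvanishing at 0, and the map U: K → M, U(g) = z^{n+1}g, is a unitary intertwining T_z on K with T_z on M. -/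
open scoped InnerProductSpace

set_option maxHeartbeats 1000000

noncomputable section

/-- Under the hypotheses of the main theorem, if every `f ∈ M` vanishes at
`0` and `n` is the largest integer such that the first `n` derivatives (i.e. Taylor
coefficients of order `≤ n`) of every `f ∈ M` vanish at `0`, then
`K = {g ∈ H² : z^{n+1} g ∈ M}`, with norm `‖g‖_K = ‖z^{n+1} g‖_M`, is a Hilbert space
contained in `H²`, invariant under `T_z`, contains a function nonvanishing at `0`, and
`U : K → M`, `U(g) = z^{n+1} g`, is a unitary intertwining `T_z` on `K` with `T_z`
on `M`. (Here `K` and the unitary `U` are described via the embedding `J`.) -/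
theorem stmt17
    {E : Type*} [NormedAddCommGroup E] [InnerProductSpace ℂ E] [CompleteSpace E]
    (J : E →ₗ[ℂ] PowerSeries ℂ) (hJinj : Function.Injective J)
    (hH2 : ∀ x : E, MemH2 (J x))
    (hnt : ∃ x : E, x ≠ 0)
    (T : E →L[ℂ] E) (hT : ∀ x : E, J (T x) = PowerSeries.X * J x)
    (δ : ℝ) (hδ : 0 < δ)
    (hlow : ∀ x : E, δ * ‖x‖ ≤ ‖T x‖)
    (hup : ∀ x : E, ‖T x‖ ≤ ‖x‖)
    (hadj : ∀ k : ℕ, ∀ x : E,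
      ((ContinuousLinearMap.adjoint T) ^ k) ((T ^ (k + 1)) x) ∈ LinearMap.range (T : E →ₗ[ℂ] E))
    (n : ℕ)
    (hvan : ∀ x : E, ∀ k ≤ n, coefn (J x) k = 0)
    (hmax : ∃ x : E, coefn (J x) (n + 1) ≠ 0)
    (K : Set (PowerSeries ℂ))
    (hK : K = {g : PowerSeries ℂ | ∃ x : E, J x = PowerSeries.X ^ (n + 1) * g}) :
    -- K is contained in H²
    (∀ g ∈ K, MemH2 g) ∧
    -- K is invariant under T_z
    (∀ g ∈ K, PowerSeries.X * g ∈ K) ∧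
    -- K contains a function nonvanishing at 0
    (∃ g ∈ K, coefn g 0 ≠ 0) ∧
    -- U : K → M, U(g) = z^{n+1} g, is a bijection (and by definition of ‖·‖_K a unitary)
    (∀ x : E, ∃ g ∈ K, J x = PowerSeries.X ^ (n + 1) * g) ∧
    (∀ g ∈ K, ∃! x : E, J x = PowerSeries.X ^ (n + 1) * g) ∧
    -- U intertwines T_z on K with T_z on M: U (z·g) = T_z (U g)
    (∀ g ∈ K, ∀ x : E, J x = PowerSeries.X ^ (n + 1) * g →
      J (T x) = PowerSeries.X ^ (n + 1) * (PowerSeries.X * g)) := by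
  subst hK
  refine ⟨?_, ?_, ?_, ?_, ?_, ?_⟩
  · rintro g ⟨x, hx⟩
    have hsum := hH2 x
    have : ∀ k, coefn g k = coefn (J x) (k + (n + 1)) := by
      intro k
      simp [coefn, hx, PowerSeries.coeff_X_pow_mul]
    have h2 : Summable (fun k => ‖coefn (J x) (k + (n + 1))‖ ^ 2) :=
      (summable_nat_add_iff (n + 1)).2 hsum
    unfold MemH2
    exact h2.congr fun k => by rw [this k]
  · rintro g ⟨x, hx⟩
    exact ⟨T x, by rw [hT x, hx, mul_left_comm]⟩
  · obtain ⟨x, hx⟩ := hmax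
    have hdvd : (PowerSeries.X : PowerSeries ℂ) ^ (n + 1) ∣ J x :=
      PowerSeries.X_pow_dvd_iff.2 fun m hm => hvan x m (Nat.lt_succ_iff.mp hm)
    obtain ⟨g, hg⟩ := hdvd
    refine ⟨g, ⟨x, hg⟩, ?_⟩
    have : coefn (J x) (n + 1) = coefn g 0 := by
      rw [coefn, coefn, hg, PowerSeries.coeff_X_pow_mul', if_pos le_rfl,
        Nat.sub_self]
    rwa [this] at hx
  · intro x
    have hdvd : (PowerSeries.X : PowerSeries ℂ) ^ (n + 1) ∣ J x :=
      PowerSeries.X_pow_dvd_iff.2 fun m hm => hvan x m (Nat.lt_succ_iff.mp hm)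
    obtain ⟨g, hg⟩ := hdvd
    exact ⟨g, ⟨x, hg⟩, hg⟩
  · rintro g ⟨x, hx⟩
    exact ⟨x, hx, fun y hy => hJinj (by rw [hx, hy])⟩
  · rintro g - x hx
    rw [hT x, hx, mul_left_comm]
end
end
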